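/- arXiv:2111.09989 — 7 statements merged into one kernel-verified Lean document; each statement's English description precedes it below -/
import Mathlib

section
/- Let μ and ν be probability measures on a measurable space, let E be a measurable set, and let α, β ∈ (0,1) with α + β < 1. If μ(E) ≤ α and ν(E) ≥ 1 − β, then the Kullback–Leibler divergence satisfies KL(μ‖ν) ≥ φ(α,β), where φ(α,β) := α·log(α/(1−β)) + (1−α)·log((1−α)/β). -/
open MeasureTheory Classical

/-- The Kullback–Leibler divergence between two measures: equal to `∫ log(dμ/dν) dμ`
when `μ ≪ ν` (and the log-likelihood ratio is integrable), and `+∞` otherwise. -/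
noncomputable def klDiv {Ω : Type*} [MeasurableSpace Ω] (μ ν : Measure Ω) : EReal :=
  if μ ≪ ν ∧ Integrable (llr μ ν) μ then ((∫ x, llr μ ν x ∂μ : ℝ) : EReal) else ⊤

/-- `φ(α,β)`: the KL divergence between a Bernoulli(α) and a Bernoulli(1-β) distribution. -/
noncomputable def phi (α β : ℝ) : ℝ :=
  α * Real.log (α / (1 - β)) + (1 - α) * Real.log ((1 - α) / β)

/-!
Donsker–Varadhan: for every test function `g`, `∫ g dμ - log ∫ exp g dν ≤ ∫ llr μ ν dμ`, by
Jensen's inequality for `exp (g - llr μ ν)` under `μ` and the change of measure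
`∫ exp (g - llr μ ν) dμ ≤ ∫ exp g dν`. For `g = t · 1_E` with `t ≤ 0` the left side is
`t μ(E) - log (1 - (1 - exp t) ν(E))`, which only decreases when `μ(E)` is raised to `α` and
`ν(E)` lowered to `1 - β`; at the optimal `t` it equals `φ(α,β)`.
-/

open Real Set

lemma mul_exp_sub_log_le {d : ℝ} (hd : 0 ≤ d) (a : ℝ) : d * exp (a - log d) ≤ exp a := by
  rcases hd.eq_or_lt with rfl | hd
  · simpa using (exp_pos a).le
  · rw [exp_sub, exp_log hd, mul_div_cancel₀ _ hd.ne']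

section DonskerVaradhan

variable {Ω : Type*} [MeasurableSpace Ω] {μ ν : Measure Ω} {g : Ω → ℝ}

lemma integrable_rnDeriv_smul_exp_sub_llr (hg : Measurable g)
    (hg_exp : Integrable (fun x ↦ exp (g x)) ν) :
    Integrable (fun x ↦ (μ.rnDeriv ν x).toReal • exp (g x - llr μ ν x)) ν := by
  refine hg_exp.mono' (by fun_prop) (Filter.Eventually.of_forall fun x ↦ ?_)
  rw [Real.norm_of_nonneg (by positivity)]
  exact mul_exp_sub_log_le ENNReal.toReal_nonneg (g x)

theorem integral_sub_integral_llr_le_log_integral_exp [IsProbabilityMeasure μ]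
    [μ.HaveLebesgueDecomposition ν] (hμν : μ ≪ ν) (h_llr : Integrable (llr μ ν) μ)
    (hg : Measurable g) (hg_int : Integrable g μ) (hg_exp : Integrable (fun x ↦ exp (g x)) ν) :
    ∫ x, g x ∂μ - ∫ x, llr μ ν x ∂μ ≤ log (∫ x, exp (g x) ∂ν) := by
  have h_int := integrable_rnDeriv_smul_exp_sub_llr (μ := μ) hg hg_exp
  have h_jensen : exp (∫ x, (g x - llr μ ν x) ∂μ) ≤ ∫ x, exp (g x - llr μ ν x) ∂μ :=
    convexOn_exp.map_integral_le continuous_exp.continuousOn isClosed_univ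
      (Filter.Eventually.of_forall fun _ ↦ mem_univ _) (hg_int.sub h_llr)
      ((integrable_rnDeriv_smul_iff hμν).mp h_int)
  have h_change : ∫ x, exp (g x - llr μ ν x) ∂μ ≤ ∫ x, exp (g x) ∂ν := by
    rw [← integral_rnDeriv_smul hμν]
    exact integral_mono h_int hg_exp fun x ↦ mul_exp_sub_log_le ENNReal.toReal_nonneg (g x)
  rw [← integral_sub hg_int h_llr,
    le_log_iff_exp_le ((exp_pos _).trans_le (h_jensen.trans h_change))]
  exact h_jensen.trans h_change

end DonskerVaradhan

lemma exp_indicator_const {Ω : Type*} (E : Set Ω) (t : ℝ) :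
    (fun x ↦ exp (E.indicator (fun _ ↦ t) x)) = fun x ↦ 1 - E.indicator (fun _ ↦ 1 - exp t) x := by
  ext x
  by_cases hx : x ∈ E <;> simp [hx]

section IndicatorTest

variable {Ω : Type*} [MeasurableSpace Ω] (ν : Measure Ω) {E : Set Ω}

lemma integrable_exp_indicator_const [IsFiniteMeasure ν] (hE : MeasurableSet E) (t : ℝ) :
    Integrable (fun x ↦ exp (E.indicator (fun _ ↦ t) x)) ν := by
  rw [exp_indicator_const]
  exact (integrable_const 1).sub ((integrable_const _).indicator hE)

lemma integral_exp_indicator_const [IsProbabilityMeasure ν] (hE : MeasurableSet E) (t : ℝ) :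
    ∫ x, exp (E.indicator (fun _ ↦ t) x) ∂ν = 1 - (1 - exp t) * ν.real E := by
  rw [exp_indicator_const, integral_sub (integrable_const 1) ((integrable_const _).indicator hE),
    integral_indicator_const _ hE]
  simp [mul_comm]

end IndicatorTest

/-- The maximiser of `t ↦ t α - log (1 - (1 - exp t) (1 - β))`. -/
noncomputable def optimalTilt (α β : ℝ) : ℝ := log (α * β / ((1 - α) * (1 - β)))

section Bernoulli

variable {α β : ℝ}

lemma phi_eq_optimalTilt_mul_sub_log (hα : α ∈ Ioo (0 : ℝ) 1) (hβ : β ∈ Ioo (0 : ℝ) 1) :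
    phi α β = optimalTilt α β * α - log (β / (1 - α)) := by
  obtain ⟨hα0, hα1⟩ := hα
  obtain ⟨hβ0, hβ1⟩ := hβ
  have h1α : 0 < 1 - α := by linarith
  have h1β : 0 < 1 - β := by linarith
  rw [phi, optimalTilt, log_div (by positivity) (by positivity),
    log_div (by positivity) (by positivity), log_div (by positivity) (by positivity),
    log_div (by positivity) (by positivity), log_mul (by positivity) (by positivity),
    log_mul (by positivity) (by positivity)]
  ring

lemma phi_le_optimalTilt_mul_sub_log {p q : ℝ} (hα : α ∈ Ioo (0 : ℝ) 1)
    (hβ : β ∈ Ioo (0 : ℝ) 1) (hαβ : α + β < 1) (hp : p ≤ α)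
    (hq : 1 - β ≤ q) (hq1 : q ≤ 1) :
    phi α β ≤ optimalTilt α β * p - log (1 - (1 - exp (optimalTilt α β)) * q) := by
  rw [phi_eq_optimalTilt_mul_sub_log hα hβ]
  obtain ⟨hα0, hα1⟩ := hα
  obtain ⟨hβ0, hβ1⟩ := hβ
  have h1α : 0 < 1 - α := by linarith
  have h1β : 0 < 1 - β := by linarith
  set r := α * β / ((1 - α) * (1 - β)) with hr
  have hr0 : 0 < r := by positivity
  have hr1 : r < 1 := by
    rw [div_lt_one (by positivity)]
    nlinarith
  rw [optimalTilt, ← hr, exp_log hr0]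
  have h_tilt : log r * α ≤ log r * p := mul_le_mul_of_nonpos_left hp (log_neg hr0 hr1).le
  have h_mass : 1 - (1 - r) * q ≤ β / (1 - α) := calc
    1 - (1 - r) * q ≤ 1 - (1 - r) * (1 - β) := by nlinarith
    _ = β / (1 - α) := by rw [hr]; field_simp; ring
  have h_pos : 0 < 1 - (1 - r) * q := by nlinarith
  linarith [log_le_log h_pos h_mass]

end Bernoulli

theorem stmt_0 {Ω : Type*} [MeasurableSpace Ω] (μ ν : Measure Ω)
    [IsProbabilityMeasure μ] [IsProbabilityMeasure ν]
    (E : Set Ω) (hE : MeasurableSet E) (α β : ℝ)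
    (hα : α ∈ Set.Ioo (0:ℝ) 1) (hβ : β ∈ Set.Ioo (0:ℝ) 1) (hαβ : α + β < 1)
    (hμE : μ E ≤ ENNReal.ofReal α) (hνE : ENNReal.ofReal (1 - β) ≤ ν E) :
    (phi α β : EReal) ≤ klDiv μ ν := by
  rw [klDiv]
  split_ifs with h
  swap; · exact le_top
  obtain ⟨hμν, h_llr⟩ := h
  have hp : μ.real E ≤ α := ENNReal.toReal_le_of_le_ofReal hα.1.le hμE
  have hq : 1 - β ≤ ν.real E := (ENNReal.ofReal_le_iff_le_toReal (measure_ne_top ν E)).mp hνE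
  set t := optimalTilt α β
  have h_dv := integral_sub_integral_llr_le_log_integral_exp hμν h_llr
    (measurable_const.indicator hE) ((integrable_const t).indicator hE)
    (integrable_exp_indicator_const ν hE t)
  rw [integral_indicator_const t hE, integral_exp_indicator_const ν hE, smul_eq_mul,
    mul_comm] at h_dv
  have h_phi := phi_le_optimalTilt_mul_sub_log hα hβ hαβ hp hq measureReal_le_one
  exact_mod_cast h_phi.trans (by linarith)
end

section
/- Let Z be an integrable real-valued random variable with E[Z] < 0 and E[exp(Z)] < ∞. Then there exists s ∈ (0,1) such that E[exp(s·Z)] < 1. -/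
/-!
The moment generating function `M(s) = E[exp (s Z)]` satisfies `M 0 = 1`, and its right derivative
at `0` is `E[Z] < 0`: for `s ∈ (0, 1]` the difference quotient `(exp (s Z) - 1) / s` lies between
`Z` and `exp Z - 1` (convexity of `exp`), so dominated convergence applies. Hence `M s < 1` for
all small `s > 0`.
-/

open MeasureTheory ProbabilityTheory Filter Topology Set Real

lemma slope_exp_mul_mem_Icc (x : ℝ) {s : ℝ} (hs₀ : 0 < s) (hs₁ : s ≤ 1) :
    slope (fun t ↦ exp (t * x)) 0 s ∈ Icc x (exp x - 1) := by
  rw [slope_def_field, zero_mul, exp_zero, sub_zero]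
  constructor
  · rw [le_div_iff₀ hs₀]
    linarith [add_one_le_exp (s * x)]
  · rw [div_le_iff₀ hs₀]
    have := convexOn_exp.2 (mem_univ 0) (mem_univ x) (sub_nonneg.2 hs₁) hs₀.le (by ring)
    simp only [smul_eq_mul, mul_zero, zero_add, exp_zero, mul_one] at this
    linarith

lemma tendsto_slope_exp_mul (x : ℝ) :
    Tendsto (slope (fun t ↦ exp (t * x)) 0) (𝓝[>] 0) (𝓝 x) := by
  have h : HasDerivAt (fun t ↦ exp (t * x)) x 0 := by
    simpa using ((hasDerivAt_id (0 : ℝ)).mul_const x).exp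
  exact (hasDerivWithinAt_iff_tendsto_slope' (s := Ioi 0) (by simp)).1 h.hasDerivWithinAt

lemma HasDerivWithinAt.eventually_lt_of_deriv_neg {f : ℝ → ℝ} {f' a : ℝ}
    (hf : HasDerivWithinAt f f' (Ioi a) a) (hf' : f' < 0) : ∀ᶠ x in 𝓝[>] a, f x < f a := by
  rw [hasDerivWithinAt_iff_tendsto_slope' (s := Ioi a) (by simp)] at hf
  filter_upwards [hf.eventually_lt_const hf', self_mem_nhdsWithin] with x hx hax
  exact (slope_neg_iff_of_le hax.le).1 hx

section

variable {Ω : Type*} [MeasurableSpace Ω] {μ : Measure Ω} [IsFiniteMeasure μ] {X : Ω → ℝ}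

lemma slope_mgf_zero_eq_integral {s : ℝ} (hs : Integrable (fun ω ↦ exp (s * X ω)) μ) :
    slope (mgf X μ) 0 s = ∫ ω, slope (fun t ↦ exp (t * X ω)) 0 s ∂μ := by
  simp only [slope_def_field, sub_zero, mgf_zero', zero_mul, exp_zero]
  rw [integral_div, integral_sub hs (integrable_const 1), integral_const, mgf]
  simp

theorem hasDerivWithinAt_mgf_Ioi_zero (hX : Integrable X μ)
    (h₁ : Integrable (fun ω ↦ exp (X ω)) μ) :
    HasDerivWithinAt (mgf X μ) μ[X] (Ioi 0) 0 := by
  rw [hasDerivWithinAt_iff_tendsto_slope' (s := Ioi 0) (by simp)]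
  have hIoc : ∀ᶠ s in 𝓝[>] (0 : ℝ), s ∈ Ioc 0 1 := Ioc_mem_nhdsGT one_pos
  have hint : ∀ s ∈ Ioc (0 : ℝ) 1, Integrable (fun ω ↦ exp (s * X ω)) μ := fun s hs ↦
    integrable_exp_mul_of_nonneg_of_le (by simpa using h₁) hs.1.le hs.2
  refine Tendsto.congr' (hIoc.mono fun s hs ↦ (slope_mgf_zero_eq_integral (hint s hs)).symm) ?_
  refine tendsto_integral_filter_of_dominated_convergence (fun ω ↦ max |X ω| |exp (X ω) - 1|)
    ?_ ?_ (hX.abs.sup (h₁.sub (integrable_const 1)).abs)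
    (ae_of_all _ fun ω ↦ tendsto_slope_exp_mul (X ω))
  · filter_upwards [hIoc] with s hs
    simp only [slope_def_field, zero_mul, exp_zero, sub_zero]
    exact (((hint s hs).sub (integrable_const _)).div_const _).aestronglyMeasurable
  · filter_upwards [hIoc] with s hs
    refine ae_of_all _ fun ω ↦ ?_
    have h := slope_exp_mul_mem_Icc (X ω) hs.1 hs.2
    exact abs_le_max_abs_abs h.1 h.2

end

theorem stmt_1_general {Ω : Type*} [MeasurableSpace Ω] (P : Measure Ω) [IsProbabilityMeasure P]
    (Z : Ω → ℝ) (hint : Integrable Z P)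
    (hmean : ∫ ω, Z ω ∂P < 0)
    (hexp : ∫⁻ ω, ENNReal.ofReal (Real.exp (Z ω)) ∂P < ⊤) :
    ∃ s ∈ Set.Ioo (0:ℝ) 1, ∫⁻ ω, ENNReal.ofReal (Real.exp (s * Z ω)) ∂P < 1 := by
  have h₁ : Integrable (fun ω ↦ exp (Z ω)) P :=
    (lintegral_ofReal_ne_top_iff_integrable (hint.1.aemeasurable.exp.aestronglyMeasurable)
      (ae_of_all _ fun ω ↦ (exp_pos _).le)).1 hexp.ne
  have h_mgf_lt : ∀ᶠ s in 𝓝[>] 0, mgf Z P s < 1 := by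
    simpa only [mgf_zero] using
      (hasDerivWithinAt_mgf_Ioi_zero hint h₁).eventually_lt_of_deriv_neg hmean
  obtain ⟨s, hs_lt, hs⟩ := (h_mgf_lt.and (Ioo_mem_nhdsGT one_pos)).exists
  refine ⟨s, hs, ?_⟩
  rw [← ofReal_integral_eq_lintegral_ofReal
    (integrable_exp_mul_of_nonneg_of_le (by simpa using h₁) hs.1.le hs.2.le)
    (ae_of_all _ fun ω ↦ (exp_pos _).le)]
  exact ENNReal.ofReal_lt_one.2 hs_lt

theorem stmt_1 {Ω : Type*} [MeasurableSpace Ω] (P : Measure Ω) [IsProbabilityMeasure P]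
    (Z : Ω → ℝ) (hmeas : Measurable Z) (hint : Integrable Z P)
    (hmean : ∫ ω, Z ω ∂P < 0)
    (hexp : ∫⁻ ω, ENNReal.ofReal (Real.exp (Z ω)) ∂P < ⊤) :
    ∃ s ∈ Set.Ioo (0:ℝ) 1, ∫⁻ ω, ENNReal.ofReal (Real.exp (s * Z ω)) ∂P < 1 :=
  stmt_1_general P Z hint hmean hexp
end

section
/- For every ρ ∈ (0,1] and every ε > 0, the sequence n ↦ P(Λ(n) < n·(ρ·I − ε) and π(n) ≥ ρ) is exponentially decaying. -/
/-!
A Chernoff bound along the sampled times. Write `g = llr μ1 μ0`. Since `E_{μ1}[exp (-g)] ≤ 1`,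
convexity gives `A_λ := E_{μ1}[exp (-λ g)] ≤ 1` for `λ ∈ [0, 1]`, and dominated convergence gives
`(A_λ - 1) / λ → -I` as `λ → 0+`; fix `λ` with `log A_λ ≤ -λ (I - ε / 2)`. As each `R_m ∈ {0, 1}` is
previsible and `X_m` is independent of the past, `exp (∑ R_m (-λ g (X_m) - log A_λ))` has
expectation `1`. On the event in question its exponent is at least `λ ε n / 2`, so Markov's
inequality bounds the probability by `exp (-λ ε n / 2)`.
-/

open MeasureTheory ProbabilityTheory Real Filter Topology Finset

section Tilting

lemma exp_neg_mul_le {l : ℝ} (hl0 : 0 ≤ l) (hl1 : l ≤ 1) (t : ℝ) :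
    exp (-(l * t)) ≤ l * exp (-t) + (1 - l) := by
  have h := convexOn_exp.2 (Set.mem_univ (-t)) (Set.mem_univ 0) hl0 (sub_nonneg.2 hl1)
    (add_sub_cancel l 1)
  simpa [smul_eq_mul, mul_neg] using h

lemma neg_le_exp_neg_mul_sub_one_div {l : ℝ} (hl : 0 < l) (t : ℝ) :
    -t ≤ (exp (-(l * t)) - 1) / l := by
  rw [le_div_iff₀ hl]
  linarith [add_one_le_exp (-(l * t))]

lemma exp_neg_mul_sub_one_div_le {l : ℝ} (hl0 : 0 < l) (hl1 : l ≤ 1) (t : ℝ) :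
    (exp (-(l * t)) - 1) / l ≤ exp (-t) - 1 := by
  rw [div_le_iff₀ hl0]
  linarith [exp_neg_mul_le hl0.le hl1 t]

lemma tendsto_exp_neg_mul_sub_one_div (t : ℝ) :
    Tendsto (fun l => (exp (-(l * t)) - 1) / l) (𝓝[>] 0) (𝓝 (-t)) := by
  have h : HasDerivAt (fun l => exp (-(l * t))) (-t) 0 := by
    simpa using ((hasDerivAt_mul_const (x := 0) t).neg).exp
  refine ((hasDerivAt_iff_tendsto_slope.1 h).mono_left
    (nhdsWithin_mono _ fun x hx => ne_of_gt hx)).congr fun l => ?_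
  simp [slope_def_field]

variable {S : Type*} [MeasurableSpace S] {μ : Measure S} [IsProbabilityMeasure μ] {g : S → ℝ}

lemma integrable_exp_neg_mul (hg : AEStronglyMeasurable g μ)
    (hexp : Integrable (fun x => exp (-g x)) μ) {l : ℝ} (hl0 : 0 ≤ l) (hl1 : l ≤ 1) :
    Integrable (fun x => exp (-(l * g x))) μ :=
  ((hexp.const_mul l).add (integrable_const (1 - l))).mono'
    (continuous_exp.comp_aestronglyMeasurable (hg.const_mul l).neg)
    (ae_of_all _ fun x => by
      rw [norm_of_nonneg (exp_pos _).le]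
      exact exp_neg_mul_le hl0 hl1 (g x))

lemma integral_exp_neg_mul_le_one (hg : AEStronglyMeasurable g μ)
    (hexp : Integrable (fun x => exp (-g x)) μ) (hexp1 : ∫ x, exp (-g x) ∂μ ≤ 1)
    {l : ℝ} (hl0 : 0 ≤ l) (hl1 : l ≤ 1) :
    ∫ x, exp (-(l * g x)) ∂μ ≤ 1 := by
  calc ∫ x, exp (-(l * g x)) ∂μ ≤ ∫ x, (l * exp (-g x) + (1 - l)) ∂μ :=
        integral_mono (integrable_exp_neg_mul hg hexp hl0 hl1)
          ((hexp.const_mul l).add (integrable_const _)) fun x => exp_neg_mul_le hl0 hl1 (g x)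
    _ = l * ∫ x, exp (-g x) ∂μ + (1 - l) := by
        rw [integral_add (hexp.const_mul l) (integrable_const _), integral_const_mul]
        simp
    _ ≤ 1 := by nlinarith

lemma tendsto_integral_exp_neg_mul_sub_one_div (hg : Integrable g μ)
    (hexp : Integrable (fun x => exp (-g x)) μ) :
    Tendsto (fun l => ∫ x, (exp (-(l * g x)) - 1) / l ∂μ) (𝓝[>] 0) (𝓝 (-∫ x, g x ∂μ)) := by
  rw [← integral_neg]
  refine tendsto_integral_filter_of_dominated_convergence (fun x => |g x| + exp (-g x) + 1)
    (Eventually.of_forall fun l => by have := hg.aestronglyMeasurable; fun_prop)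
    ?_ ((hg.abs.add hexp).add (integrable_const 1))
    (ae_of_all _ fun x => tendsto_exp_neg_mul_sub_one_div (g x))
  filter_upwards [Ioc_mem_nhdsGT zero_lt_one] with l ⟨hl0, hl1⟩
  refine ae_of_all _ fun x => abs_le.2 ⟨?_, ?_⟩
  · linarith [neg_le_exp_neg_mul_sub_one_div hl0 (g x), le_abs_self (g x), exp_pos (-g x)]
  · linarith [exp_neg_mul_sub_one_div_le hl0 hl1 (g x), le_abs_self (g x), abs_nonneg (g x)]

lemma exists_integral_exp_neg_mul_le (hg : Integrable g μ)
    (hexp : Integrable (fun x => exp (-g x)) μ) {δ : ℝ} (hδ : 0 < δ) :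
    ∃ l ∈ Set.Ioc (0 : ℝ) 1, ∫ x, exp (-(l * g x)) ∂μ ≤ 1 - l * (∫ x, g x ∂μ - δ) := by
  have hlt : ∀ᶠ l in 𝓝[>] 0, ∫ x, (exp (-(l * g x)) - 1) / l ∂μ < -∫ x, g x ∂μ + δ :=
    (tendsto_integral_exp_neg_mul_sub_one_div hg hexp).eventually_lt_const (by linarith)
  obtain ⟨l, hl, hl_lt⟩ := (Eventually.and (Ioc_mem_nhdsGT zero_lt_one) hlt).exists
  refine ⟨l, hl, ?_⟩
  have hint := integrable_exp_neg_mul hg.aestronglyMeasurable hexp hl.1.le hl.2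
  rw [integral_div, integral_sub hint (integrable_const 1), div_lt_iff₀ hl.1] at hl_lt
  simp only [integral_const, probReal_univ, smul_eq_mul, mul_one] at hl_lt
  linarith

lemma exists_integral_exp_neg_mul_sub_eq_one (hg : Integrable g μ)
    (hexp : Integrable (fun x => exp (-g x)) μ) (hexp1 : ∫ x, exp (-g x) ∂μ ≤ 1) {δ : ℝ}
    (hδ : 0 < δ) :
    ∃ l > 0, ∃ c ≤ 0, c ≤ -(l * (∫ x, g x ∂μ - δ)) ∧
      Integrable (fun x => exp (-(l * g x) - c)) μ ∧ ∫ x, exp (-(l * g x) - c) ∂μ = 1 := by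
  obtain ⟨l, ⟨hl0, hl1⟩, hlA⟩ := exists_integral_exp_neg_mul_le hg hexp hδ
  have hint := integrable_exp_neg_mul hg.1 hexp hl0.le hl1
  set A := ∫ x, exp (-(l * g x)) ∂μ
  have hA0 : 0 < A := integral_exp_pos hint
  have hnormalize : (fun x => exp (-(l * g x) - log A)) = fun x => exp (-(l * g x)) / A := by
    ext x
    rw [exp_sub, exp_log hA0]
  refine ⟨l, hl0, log A, log_nonpos hA0.le (integral_exp_neg_mul_le_one hg.1 hexp hexp1 hl0.le hl1),
    (log_le_sub_one_of_pos hA0).trans (by linarith), ?_, ?_⟩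
  · rw [hnormalize]
    exact hint.div_const A
  · rw [hnormalize, integral_div, div_self hA0.ne']

end Tilting

section LogLikelihoodRatio

variable {S : Type*} [MeasurableSpace S] {μ ν : Measure S} [SigmaFinite μ]

lemma integrable_exp_neg_llr [IsFiniteMeasure ν] (hμν : μ ≪ ν) :
    Integrable (fun x => exp (-llr μ ν x)) μ :=
  Measure.integrable_toReal_rnDeriv.congr (exp_neg_llr hμν).symm

lemma integral_exp_neg_llr_le_one [IsProbabilityMeasure ν] (hμν : μ ≪ ν) :
    ∫ x, exp (-llr μ ν x) ∂μ ≤ 1 := by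
  rw [integral_congr_ae (exp_neg_llr hμν), Measure.integral_toReal_rnDeriv']
  have := measureReal_nonneg (μ := ν.singularPart μ) (s := Set.univ)
  simp only [probReal_univ]
  linarith

end LogLikelihoodRatio

section ExponentialMartingale

variable {Ω : Type*} {mΩ : MeasurableSpace Ω} {P : Measure Ω}

lemma mul_exp_add_one_sub_eq_exp_mul {r : ℝ} (hr : r = 0 ∨ r = 1) (a : ℝ) :
    r * exp a + (1 - r) = exp (r * a) := by
  rcases hr with rfl | rfl <;> simp

lemma integrable_mul_exp_mul_and_integral_eq {m : MeasurableSpace Ω} (hm : m ≤ mΩ)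
    {Z r Y : Ω → ℝ} (hZ : Measurable[m] Z) (hr : Measurable[m] r)
    (hr01 : ∀ ω, r ω = 0 ∨ r ω = 1) (hind : Indep (.comap Y Real.measurableSpace) m P)
    (hZi : Integrable Z P) (hYi : Integrable (fun ω => exp (Y ω)) P)
    (hY1 : ∫ ω, exp (Y ω) ∂P = 1) :
    Integrable (fun ω => Z ω * exp (r ω * Y ω)) P ∧
      ∫ ω, Z ω * exp (r ω * Y ω) ∂P = ∫ ω, Z ω ∂P := by
  have hr' : Measurable[mΩ] r := hr.mono hm le_rfl
  have hbound : ∀ ω, ‖r ω‖ ≤ 1 ∧ ‖1 - r ω‖ ≤ 1 := fun ω => by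
    rcases hr01 ω with h | h <;> simp [h]
  have hUi : Integrable (fun ω => Z ω * r ω) P :=
    hZi.mul_bdd hr'.aestronglyMeasurable (ae_of_all _ fun ω => (hbound ω).1)
  have hVi : Integrable (fun ω => Z ω * (1 - r ω)) P :=
    hZi.mul_bdd (measurable_const.sub hr').aestronglyMeasurable
      (ae_of_all _ fun ω => (hbound ω).2)
  have hindep : IndepFun (fun ω => Z ω * r ω) (fun ω => exp (Y ω)) P := by
    rw [IndepFun_iff_Indep]
    exact indep_of_indep_of_le_right (indep_of_indep_of_le_left hind.symm (hZ.mul hr).comap_le)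
      (measurable_exp.comp (comap_measurable Y)).comap_le
  have hsplit : (fun ω => Z ω * exp (r ω * Y ω)) =
      (fun ω => Z ω * r ω) * (fun ω => exp (Y ω)) + fun ω => Z ω * (1 - r ω) := by
    ext ω
    simp only [Pi.add_apply, Pi.mul_apply, ← mul_exp_add_one_sub_eq_exp_mul (hr01 ω)]
    ring
  have hprod := hindep.integrable_mul hUi hYi
  refine ⟨hsplit ▸ hprod.add hVi, ?_⟩
  rw [hsplit, integral_add' hprod hVi, hindep.integral_mul_eq_mul_integral hUi.1 hYi.1, hY1,
    mul_one, ← integral_add hUi hVi]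
  congr 1 with ω
  ring

theorem integrable_exp_sum_mul_and_integral_eq_one [IsProbabilityMeasure P] (F : Filtration ℕ mΩ)
    {R Y : ℕ → Ω → ℝ}
    (hR01 : ∀ n ω, R n ω = 0 ∨ R n ω = 1) (hRmeas : ∀ n, 1 ≤ n → Measurable[F (n - 1)] (R n))
    (hYmeas : ∀ n, 1 ≤ n → Measurable[F n] (Y n))
    (hYindep : ∀ n, 1 ≤ n → Indep (.comap (Y n) Real.measurableSpace) (F (n - 1)) P)
    (hYint : ∀ n, 1 ≤ n → Integrable (fun ω => exp (Y n ω)) P)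
    (hY1 : ∀ n, 1 ≤ n → ∫ ω, exp (Y n ω) ∂P = 1) (n : ℕ) :
    Integrable (fun ω => exp (∑ m ∈ Icc 1 n, R m ω * Y m ω)) P ∧
      ∫ ω, exp (∑ m ∈ Icc 1 n, R m ω * Y m ω) ∂P = 1 := by
  induction n with
  | zero => simp
  | succ n ih =>
    have hsum : Measurable[F n] fun ω => ∑ m ∈ Icc 1 n, R m ω * Y m ω :=
      Finset.measurable_sum _ fun m hm => by
        obtain ⟨hm1, hmn⟩ := Finset.mem_Icc.1 hm
        exact ((hRmeas m hm1).mono (F.mono (by omega)) le_rfl).mul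
          ((hYmeas m hm1).mono (F.mono hmn) le_rfl)
    have hstep := integrable_mul_exp_mul_and_integral_eq (F.le n) hsum.exp
      (by simpa using hRmeas (n + 1) (by omega)) (hR01 (n + 1))
      (by simpa using hYindep (n + 1) (by omega)) ih.1 (hYint (n + 1) (by omega))
      (hY1 (n + 1) (by omega))
    simp only [Finset.sum_Icc_succ_top (Nat.le_add_left 1 n), exp_add]
    exact ⟨hstep.1, hstep.2.trans ih.2⟩

end ExponentialMartingale

lemma measure_le_ofReal_exp_neg_of_integral_exp_eq_one {Ω : Type*} {mΩ : MeasurableSpace Ω}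
    {P : Measure Ω} [IsFiniteMeasure P] {Z : Ω → ℝ} (hint : Integrable (fun ω => exp (Z ω)) P)
    (h1 : ∫ ω, exp (Z ω) ∂P = 1) (t : ℝ) :
    P {ω | t ≤ Z ω} ≤ ENNReal.ofReal (exp (-t)) := by
  rw [← ofReal_measureReal]
  gcongr
  have h := measure_ge_le_exp_mul_mgf t zero_le_one (by simpa using hint)
  simp only [mgf, one_mul, h1, mul_one] at h
  simpa using h

lemma le_sum_mul_neg_mul_sub {ι : Type*} {s : Finset ι} {r x : ι → ℝ} {l c ρ I ε n : ℝ}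
    (hl : 0 < l) (hc0 : c ≤ 0) (hcI : c ≤ -(l * (I - ε / 2))) (hρ0 : 0 ≤ ρ) (hρ1 : ρ ≤ 1)
    (hε : 0 < ε) (hn : 0 ≤ n) (hΛ : ∑ i ∈ s, x i * r i < n * (ρ * I - ε))
    (hN : ρ * n ≤ ∑ i ∈ s, r i) :
    l * ε / 2 * n ≤ ∑ i ∈ s, r i * (-(l * x i) - c) := by
  have hsum : ∑ i ∈ s, r i * (-(l * x i) - c) = -l * ∑ i ∈ s, x i * r i - c * ∑ i ∈ s, r i := by
    rw [Finset.mul_sum, Finset.mul_sum, ← Finset.sum_sub_distrib]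
    exact Finset.sum_congr rfl fun i _ => by ring
  have h1 : l * ∑ i ∈ s, x i * r i ≤ l * (n * (ρ * I - ε)) :=
    mul_le_mul_of_nonneg_left hΛ.le hl.le
  have h2 : -c * (ρ * n) ≤ -c * ∑ i ∈ s, r i := mul_le_mul_of_nonneg_left hN (neg_nonneg.2 hc0)
  have h3 : l * (I - ε / 2) * (ρ * n) ≤ -c * (ρ * n) :=
    mul_le_mul_of_nonneg_right (by linarith) (mul_nonneg hρ0 hn)
  rw [hsum]
  nlinarith [mul_nonneg (mul_nonneg (mul_nonneg hl.le hε.le) hn) (sub_nonneg.2 hρ1)]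

theorem stmt_2_general {Ω : Type*} [mΩ : MeasurableSpace Ω] (P : Measure Ω) [IsProbabilityMeasure P]
    {S : Type*} [mS : MeasurableSpace S] (μ0 μ1 : Measure S)
    [IsProbabilityMeasure μ0] [IsProbabilityMeasure μ1]
    -- both KL divergences are finite and positive
    (hac1 : μ1 ≪ μ0)
    (hint1 : Integrable (llr μ1 μ0) μ1)
    (I : ℝ) (hI : I = ∫ x, llr μ1 μ0 x ∂μ1)
    -- the filtration
    (F : Filtration ℕ mΩ)
    -- the i.i.d. observations, with common law μ1, adapted and independent of the past
    (X : ℕ → Ω → S)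
    (hXmeas : ∀ n, 1 ≤ n → Measurable[F n] (X n))
    (hXlaw : ∀ n, 1 ≤ n → Measure.map (X n) P = μ1)
    (hXindep : ∀ n, 1 ≤ n → Indep (MeasurableSpace.comap (X n) mS) (F (n - 1)) P)
    -- the sampling indicators, previsible and {0,1}-valued
    (R : ℕ → Ω → ℝ)
    (hR01 : ∀ n ω, R n ω = 0 ∨ R n ω = 1)
    (hRmeas : ∀ n, 1 ≤ n → Measurable[F (n - 1)] (R n))
    (ρ ε : ℝ) (hρ : ρ ∈ Set.Ioc (0:ℝ) 1) (hε : 0 < ε) :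
    -- the sequence n ↦ P(Λ(n) < n(ρI - ε), π(n) ≥ ρ) is exponentially decaying
    ∃ c > (0:ℝ), ∃ d > (0:ℝ), ∀ n : ℕ, 1 ≤ n →
      P {ω | (∑ m ∈ Finset.Icc 1 n, llr μ1 μ0 (X m ω) * R m ω) < n * (ρ * I - ε) ∧
             ρ ≤ (∑ m ∈ Finset.Icc 1 n, R m ω) / n}
        ≤ ENNReal.ofReal (c * Real.exp (-d * n)) := by
  obtain ⟨l, hl, c, hc0, hcI, hint, hint_one⟩ := exists_integral_exp_neg_mul_sub_eq_one hint1
    (integrable_exp_neg_llr hac1) (integral_exp_neg_llr_le_one hac1) (half_pos hε)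
  rw [← hI] at hcI
  -- `exp ∘ a` is the density of the exponentially tilted law with respect to `μ1`
  set a : S → ℝ := fun x => -(l * llr μ1 μ0 x) - c
  have ha : Measurable a := ((measurable_llr μ1 μ0).const_mul l).neg.sub_const c
  have hXm : ∀ m, 1 ≤ m → Measurable (X m) := fun m hm => (hXmeas m hm).mono (F.le m) le_rfl
  have hmap : ∀ m, 1 ≤ m → Integrable (fun x => exp (a x)) (P.map (X m)) := fun m hm => by
    rwa [hXlaw m hm]
  have hmart := integrable_exp_sum_mul_and_integral_eq_one (Y := fun m ω => a (X m ω)) F hR01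
    hRmeas (fun m hm => ha.comp (hXmeas m hm))
    (fun m hm => indep_of_indep_of_le_left (hXindep m hm)
      (ha.comp (comap_measurable (X m))).comap_le)
    (fun m hm => (hmap m hm).comp_measurable (hXm m hm))
    (fun m hm => (integral_map (hXm m hm).aemeasurable (hmap m hm).1).symm.trans
      (by rw [hXlaw m hm, hint_one]))
  refine ⟨1, one_pos, l * ε / 2, by positivity, fun n hn => ?_⟩
  calc P _ ≤ P {ω | l * ε / 2 * n ≤ ∑ m ∈ Icc 1 n, R m ω * a (X m ω)} :=
        measure_mono fun ω (⟨hΛ, hN⟩ : _ ∧ _) => le_sum_mul_neg_mul_sub hl hc0 hcI hρ.1.le hρ.2 hε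
          n.cast_nonneg hΛ ((le_div_iff₀ (by exact_mod_cast hn)).1 hN)
    _ ≤ ENNReal.ofReal (exp (-(l * ε / 2 * n))) :=
        measure_le_ofReal_exp_neg_of_integral_exp_eq_one (hmart n).1 (hmart n).2 _
    _ = ENNReal.ofReal (1 * exp (-(l * ε / 2) * n)) := by ring_nf

theorem stmt_2 {Ω : Type*} [mΩ : MeasurableSpace Ω] (P : Measure Ω) [IsProbabilityMeasure P]
    {S : Type*} [mS : MeasurableSpace S] (μ0 μ1 : Measure S)
    [IsProbabilityMeasure μ0] [IsProbabilityMeasure μ1]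
    -- both KL divergences are finite and positive
    (hac1 : μ1 ≪ μ0) (hac0 : μ0 ≪ μ1)
    (hint1 : Integrable (llr μ1 μ0) μ1) (hint0 : Integrable (llr μ0 μ1) μ0)
    (I : ℝ) (hI : I = ∫ x, llr μ1 μ0 x ∂μ1) (hIpos : 0 < I)
    (hJpos : 0 < ∫ x, llr μ0 μ1 x ∂μ0)
    -- the filtration
    (F : Filtration ℕ mΩ)
    -- the i.i.d. observations, with common law μ1, adapted and independent of the past
    (X : ℕ → Ω → S)
    (hXmeas : ∀ n, 1 ≤ n → Measurable[F n] (X n))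
    (hXlaw : ∀ n, 1 ≤ n → Measure.map (X n) P = μ1)
    (hXiid : iIndepFun X P)
    (hXindep : ∀ n, 1 ≤ n → Indep (MeasurableSpace.comap (X n) mS) (F (n - 1)) P)
    -- the sampling indicators, previsible and {0,1}-valued
    (R : ℕ → Ω → ℝ)
    (hR01 : ∀ n ω, R n ω = 0 ∨ R n ω = 1)
    (hRmeas : ∀ n, 1 ≤ n → Measurable[F (n - 1)] (R n))
    (ρ ε : ℝ) (hρ : ρ ∈ Set.Ioc (0:ℝ) 1) (hε : 0 < ε) :
    -- the sequence n ↦ P(Λ(n) < n(ρI - ε), π(n) ≥ ρ) is exponentially decaying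
    ∃ c > (0:ℝ), ∃ d > (0:ℝ), ∀ n : ℕ, 1 ≤ n →
      P {ω | (∑ m ∈ Finset.Icc 1 n, llr μ1 μ0 (X m ω) * R m ω) < n * (ρ * I - ε) ∧
             ρ ≤ (∑ m ∈ Finset.Icc 1 n, R m ω) / n}
        ≤ ENNReal.ofReal (c * Real.exp (-d * n)) :=
  stmt_2_general (mΩ := mΩ) P (mS := mS) μ0 μ1 hac1 hint1 I hI F X hXmeas hXlaw hXindep R hR01
    hRmeas ρ ε hρ hε
end

section
/- For every ρ ∈ (0,1] and every ε > 0, the sequence n ↦ P(Λ(n) < n·(ρ·I − ε) and π_X(n) ≥ ρ) is exponentially decaying. -/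
/-!
Write `u = -g₁`. The right derivative at `0` of `t ↦ E[exp (t u(X))]` is `E[u(X)] = -I`, so for
some `t ∈ (0, 1]` the cumulant `c = log E[exp (t u(X))]` satisfies `c < t (ε - I)`; also `c ≤ 0`.
Since `E[exp g₂(Y)] ≤ 1`, convexity gives `E[exp (s g₂(Y))] ≤ 1` for `s ∈ [0, 1]`, and as `R_m`,
`S_m` are previsible and `{0,1}`-valued, each increment `R_m (t u(X_m) - c) + S_m t g₂(Y_m)` has
conditional exponential moment at most one. Hence `exp (-t Λ(n) - c ∑ R_m)` has mean at most one.
On the event, `-t Λ(n) - c ∑ R_m ≥ n (t (ε - ρ I) - ρ c)`, a positive multiple of `n`, and Markov's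
inequality concludes.
-/

open MeasureTheory ProbabilityTheory Real Filter Topology
open scoped ENNReal

section ExpMoments

variable {α : Type*} [MeasurableSpace α] {μ : Measure α} {u : α → ℝ} {t : ℝ}

lemma exp_mul_le_mul_exp_add_one_sub (ht₀ : 0 ≤ t) (ht₁ : t ≤ 1) (x : ℝ) :
    exp (t * x) ≤ t * exp x + (1 - t) := by
  simpa [smul_eq_mul] using
    convexOn_exp.2 (Set.mem_univ x) (Set.mem_univ 0) ht₀ (sub_nonneg.2 ht₁) (by ring)

variable [IsProbabilityMeasure μ]

lemma lintegral_exp_mul_le_one (hu : ∫⁻ x, ENNReal.ofReal (exp (u x)) ∂μ ≤ 1)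
    (ht₀ : 0 ≤ t) (ht₁ : t ≤ 1) : ∫⁻ x, ENNReal.ofReal (exp (t * u x)) ∂μ ≤ 1 := calc
  _ ≤ ∫⁻ x, ENNReal.ofReal t * ENNReal.ofReal (exp (u x)) + ENNReal.ofReal (1 - t) ∂μ := by
    gcongr with x
    rw [← ENNReal.ofReal_mul ht₀, ← ENNReal.ofReal_add (by positivity) (by linarith)]
    exact ENNReal.ofReal_le_ofReal (exp_mul_le_mul_exp_add_one_sub ht₀ ht₁ _)
  _ = ENNReal.ofReal t * ∫⁻ x, ENNReal.ofReal (exp (u x)) ∂μ + ENNReal.ofReal (1 - t) := by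
    rw [lintegral_add_right _ measurable_const, lintegral_const_mul' _ _ ENNReal.ofReal_ne_top,
      lintegral_const, measure_univ, mul_one]
  _ ≤ ENNReal.ofReal t * 1 + ENNReal.ofReal (1 - t) := by gcongr
  _ = 1 := by rw [mul_one, ← ENNReal.ofReal_add ht₀ (by linarith)]; simp

lemma integrable_exp_mul (hu : AEStronglyMeasurable u μ)
    (he : ∫⁻ x, ENNReal.ofReal (exp (u x)) ∂μ ≤ 1) (ht₀ : 0 ≤ t) (ht₁ : t ≤ 1) :
    Integrable (fun x ↦ exp (t * u x)) μ :=
  (lintegral_ofReal_ne_top_iff_integrable (continuous_exp.comp_aestronglyMeasurable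
    (hu.const_mul t)) (ae_of_all _ fun _ ↦ (exp_pos _).le)).1
    (ne_top_of_le_ne_top ENNReal.one_ne_top (lintegral_exp_mul_le_one he ht₀ ht₁))

lemma mgf_le_one (he : ∫⁻ x, ENNReal.ofReal (exp (u x)) ∂μ ≤ 1) (ht₀ : 0 ≤ t) (ht₁ : t ≤ 1) :
    mgf u μ t ≤ 1 := by
  by_cases hint : Integrable (fun x ↦ exp (t * u x)) μ
  · rw [← ENNReal.ofReal_le_one, mgf,
      ofReal_integral_eq_lintegral_ofReal hint (ae_of_all _ fun _ ↦ (exp_pos _).le)]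
    exact lintegral_exp_mul_le_one he ht₀ ht₁
  · simp [mgf_undef hint]

lemma cgf_nonpos (he : ∫⁻ x, ENNReal.ofReal (exp (u x)) ∂μ ≤ 1) (ht₀ : 0 ≤ t) (ht₁ : t ≤ 1) :
    cgf u μ t ≤ 0 :=
  log_nonpos mgf_nonneg (mgf_le_one he ht₀ ht₁)

lemma lintegral_exp_mul_sub_cgf (ht : Integrable (fun x ↦ exp (t * u x)) μ) :
    ∫⁻ x, ENNReal.ofReal (exp (t * u x - cgf u μ t)) ∂μ = 1 := by
  rw [← setLIntegral_univ, ← tilted_mul_apply_cgf _ ht,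
    (isProbabilityMeasure_tilted ht).measure_univ]

lemma tendsto_mgf_sub_one_div (hu : Integrable u μ)
    (he : ∫⁻ x, ENNReal.ofReal (exp (u x)) ∂μ ≤ 1) :
    Tendsto (fun t ↦ (mgf u μ t - 1) / t) (𝓝[>] 0) (𝓝 (∫ x, u x ∂μ)) := by
  have hIoc : Set.Ioc (0 : ℝ) 1 ∈ 𝓝[>] 0 := Ioc_mem_nhdsGT one_pos
  have hint {t : ℝ} (ht : t ∈ Set.Ioc (0 : ℝ) 1) := integrable_exp_mul hu.1 he ht.1.le ht.2
  have hslope (x : α) : Tendsto (fun t ↦ (exp (t * u x) - 1) / t) (𝓝[>] 0) (𝓝 (u x)) := by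
    have hd : HasDerivAt (fun t ↦ exp (t * u x)) (u x) 0 := by
      simpa using ((hasDerivAt_id (0 : ℝ)).mul_const (u x)).exp
    refine (hasDerivAt_iff_tendsto_slope.mp hd).mono_left (nhdsWithin_mono _ ?_) |>.congr ?_
    · exact fun t (ht : 0 < t) ↦ ht.ne'
    · intro t; simp [slope_def_field]
  refine (tendsto_integral_filter_of_dominated_convergence (fun x ↦ |u x| + exp (u x) + 1)
    ?_ ?_ ((hu.abs.add (by simpa using hint ⟨one_pos, le_rfl⟩)).add (integrable_const 1))
    (ae_of_all _ hslope)).congr' ?_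
  · filter_upwards [hIoc] with t ht
    exact (((hint ht).sub (integrable_const 1)).div_const t).aestronglyMeasurable
  · filter_upwards [hIoc] with t ⟨ht₀, ht₁⟩
    refine ae_of_all _ fun x ↦ ?_
    -- the chord slope of the convex `s ↦ exp (s * u x)` over `[0, t]` lies between its slope at `0`
    -- and its chord slope over `[0, 1]`
    have hlow : u x ≤ (exp (t * u x) - 1) / t := by
      rw [le_div_iff₀ ht₀]; linarith [add_one_le_exp (t * u x)]
    have hup : (exp (t * u x) - 1) / t ≤ exp (u x) - 1 := by
      rw [div_le_iff₀ ht₀]; nlinarith [exp_mul_le_mul_exp_add_one_sub ht₀.le ht₁ (u x)]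
    rw [norm_eq_abs, abs_le]
    constructor <;> linarith [neg_abs_le (u x), le_abs_self (u x), exp_pos (u x)]
  · filter_upwards [hIoc] with t ht
    rw [mgf, integral_div, integral_sub (hint ht) (integrable_const 1), integral_const,
      probReal_univ, one_smul]

lemma exists_cgf_lt (hu : Integrable u μ) (he : ∫⁻ x, ENNReal.ofReal (exp (u x)) ∂μ ≤ 1)
    {ε : ℝ} (hε : 0 < ε) : ∃ t ∈ Set.Ioc (0 : ℝ) 1, cgf u μ t < t * (∫ x, u x ∂μ + ε) := by
  obtain ⟨t, hlt, ht⟩ := ((tendsto_mgf_sub_one_div hu he).eventually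
    (gt_mem_nhds (lt_add_of_pos_right _ hε))).and (Ioc_mem_nhdsGT one_pos) |>.exists
  refine ⟨t, ht, ?_⟩
  rw [div_lt_iff₀ ht.1] at hlt
  have := log_le_sub_one_of_pos (mgf_pos (integrable_exp_mul hu.1 he ht.1.le ht.2))
  rw [cgf]
  linarith

end ExpMoments

lemma lintegral_prod_exp_mul_add_mul_le_one {α β : Type*} [MeasurableSpace α] [MeasurableSpace β]
    {μ : Measure α} {ν : Measure β} [IsProbabilityMeasure μ] [IsProbabilityMeasure ν]
    {f : α → ℝ} {g : β → ℝ} (hf : Measurable f) (hg : Measurable g)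
    (hf₁ : ∫⁻ x, ENNReal.ofReal (exp (f x)) ∂μ ≤ 1) (hg₁ : ∫⁻ y, ENNReal.ofReal (exp (g y)) ∂ν ≤ 1)
    {r s : ℝ} (hr : r ∈ Set.Icc (0 : ℝ) 1) (hs : s ∈ Set.Icc (0 : ℝ) 1) :
    ∫⁻ p, ENNReal.ofReal (exp (r * f p.1 + s * g p.2)) ∂(μ.prod ν) ≤ 1 := calc
  _ = ∫⁻ p, ENNReal.ofReal (exp (r * f p.1)) * ENNReal.ofReal (exp (s * g p.2)) ∂(μ.prod ν) := by
    simp_rw [exp_add, ENNReal.ofReal_mul (exp_pos _).le]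
  _ = (∫⁻ x, ENNReal.ofReal (exp (r * f x)) ∂μ) * ∫⁻ y, ENNReal.ofReal (exp (s * g y)) ∂ν :=
    lintegral_prod_mul (measurable_exp.comp (hf.const_mul r)).ennreal_ofReal.aemeasurable
      (measurable_exp.comp (hg.const_mul s)).ennreal_ofReal.aemeasurable
  _ ≤ 1 * 1 := by
    gcongr
    exacts [lintegral_exp_mul_le_one hf₁ hr.1 hr.2, lintegral_exp_mul_le_one hg₁ hs.1 hs.2]
  _ = 1 := one_mul 1

lemma lintegral_exp_le_one_of_ae_eq_rnDeriv {α : Type*} [MeasurableSpace α] {μ ν : Measure α}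
    [IsProbabilityMeasure ν] {f : α → ℝ}
    (hf : (fun x ↦ exp (f x)) =ᵐ[μ] fun x ↦ (ν.rnDeriv μ x).toReal) :
    ∫⁻ x, ENNReal.ofReal (exp (f x)) ∂μ ≤ 1 := calc
  _ = ∫⁻ x, ENNReal.ofReal (ν.rnDeriv μ x).toReal ∂μ :=
    lintegral_congr_ae (hf.fun_comp ENNReal.ofReal)
  _ ≤ ∫⁻ x, ν.rnDeriv μ x ∂μ := lintegral_mono fun _ ↦ ENNReal.ofReal_toReal_le
  _ ≤ 1 := (Measure.lintegral_rnDeriv_le).trans_eq measure_univ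

section Independence

variable {Ω T E : Type*} [mΩ : MeasurableSpace Ω] [MeasurableSpace T] [mE : MeasurableSpace E]
  {P : Measure Ω}

lemma lintegral_comp_eq_lintegral_lintegral_map_of_indepFun [IsFiniteMeasure P]
    {θ : Ω → T} {ξ : Ω → E} (hθ : Measurable θ) (hξ : Measurable ξ) (hind : IndepFun θ ξ P) {g : T → E → ℝ≥0∞}
    (hg : Measurable (Function.uncurry g)) :
    ∫⁻ ω, g (θ ω) (ξ ω) ∂P = ∫⁻ ω, ∫⁻ x, g (θ ω) x ∂(P.map ξ) ∂P := calc
  _ = ∫⁻ p, Function.uncurry g p ∂(P.map fun ω ↦ (θ ω, ξ ω)) :=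
    (lintegral_map hg (hθ.prodMk hξ)).symm
  _ = ∫⁻ t, ∫⁻ x, g t x ∂(P.map ξ) ∂(P.map θ) := by
    rw [(indepFun_iff_map_prod_eq_prod_map_map hθ.aemeasurable hξ.aemeasurable).1 hind,
      lintegral_prod _ hg.aemeasurable]
    rfl
  _ = _ := lintegral_map (hg.lintegral_prod_right') hθ

lemma lintegral_mul_comp_le_of_indepFun [IsFiniteMeasure P] {V : Ω → ℝ≥0∞} {θ : Ω → T} {ξ : Ω → E}
    (hV : Measurable V) (hθ : Measurable θ) (hξ : Measurable ξ)
    (hind : IndepFun (fun ω ↦ (V ω, θ ω)) ξ P) {g : T → E → ℝ≥0∞}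
    (hg : Measurable (Function.uncurry g)) (hg₁ : ∀ ω, ∫⁻ x, g (θ ω) x ∂(P.map ξ) ≤ 1) :
    ∫⁻ ω, V ω * g (θ ω) (ξ ω) ∂P ≤ ∫⁻ ω, V ω ∂P := by
  rw [lintegral_comp_eq_lintegral_lintegral_map_of_indepFun (hV.prodMk hθ) hξ hind
    (g := fun p x ↦ p.1 * g p.2 x) (by fun_prop)]
  refine lintegral_mono fun ω ↦ ?_
  have hgθ : Measurable (g (θ ω)) := hg.comp measurable_prodMk_left
  rw [lintegral_const_mul _ hgθ]
  exact mul_le_of_le_one_right' (hg₁ ω)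

section Filtration

variable (F : Filtration ℕ mΩ) {ξ : ℕ → Ω → E} {θ : ℕ → Ω → T} {f : T → E → ℝ}

lemma measurable_sum_Icc_comp (hf : Measurable (Function.uncurry f))
    (hξ : ∀ m, 1 ≤ m → Measurable[F m] (ξ m)) (hθ : ∀ m, 1 ≤ m → Measurable[F (m - 1)] (θ m))
    (n : ℕ) : Measurable[F n] fun ω ↦ ∑ m ∈ Finset.Icc 1 n, f (θ m ω) (ξ m ω) :=
  Finset.measurable_sum _ fun m hm ↦ by
    obtain ⟨hm₁, hmn⟩ := Finset.mem_Icc.1 hm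
    exact hf.comp (((hθ m hm₁).mono (F.mono (by omega)) le_rfl).prodMk
      ((hξ m hm₁).mono (F.mono hmn) le_rfl))

lemma lintegral_exp_sum_le_one [IsProbabilityMeasure P] (hf : Measurable (Function.uncurry f))
    (hξ : ∀ m, 1 ≤ m → Measurable[F m] (ξ m)) (hθ : ∀ m, 1 ≤ m → Measurable[F (m - 1)] (θ m))
    (hind : ∀ m, 1 ≤ m → Indep (MeasurableSpace.comap (ξ m) mE) (F (m - 1)) P)
    (hf₁ : ∀ m, 1 ≤ m → ∀ ω, ∫⁻ x, ENNReal.ofReal (exp (f (θ m ω) x)) ∂(P.map (ξ m)) ≤ 1)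
    (n : ℕ) :
    ∫⁻ ω, ENNReal.ofReal (exp (∑ m ∈ Finset.Icc 1 n, f (θ m ω) (ξ m ω))) ∂P ≤ 1 := by
  induction n with
  | zero => simp
  | succ n ih =>
    have hV : Measurable[F n] fun ω ↦
        ENNReal.ofReal (exp (∑ m ∈ Finset.Icc 1 n, f (θ m ω) (ξ m ω))) :=
      (measurable_sum_Icc_comp F hf hξ hθ n).exp.ennreal_ofReal
    have hind' : IndepFun (fun ω ↦ (ENNReal.ofReal (exp (∑ m ∈ Finset.Icc 1 n,
        f (θ m ω) (ξ m ω))), θ (n + 1) ω)) (ξ (n + 1)) P := by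
      rw [IndepFun_iff_Indep]
      exact indep_of_indep_of_le_left (hind (n + 1) (by omega)).symm
        (hV.prodMk (hθ (n + 1) (by omega))).comap_le
    calc _ = ∫⁻ ω, ENNReal.ofReal (exp (∑ m ∈ Finset.Icc 1 n, f (θ m ω) (ξ m ω)))
          * ENNReal.ofReal (exp (f (θ (n + 1) ω) (ξ (n + 1) ω))) ∂P := by
          refine lintegral_congr fun ω ↦ ?_
          rw [Finset.sum_Icc_succ_top (by omega), exp_add, ENNReal.ofReal_mul (exp_pos _).le]
      _ ≤ _ := lintegral_mul_comp_le_of_indepFun (hV.mono (F.le n) le_rfl)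
          ((hθ (n + 1) (by omega)).mono (F.le n) le_rfl)
          ((hξ (n + 1) (by omega)).mono (F.le _) le_rfl) hind'
          (g := fun t x ↦ ENNReal.ofReal (exp (f t x))) (by fun_prop) (hf₁ (n + 1) (by omega))
      _ ≤ 1 := ih

end Filtration

end Independence

lemma measure_le_le_exp_neg_of_lintegral_exp_le_one {Ω : Type*} [MeasurableSpace Ω]
    {P : Measure Ω} {Y : Ω → ℝ} (hY : AEMeasurable Y P)
    (h : ∫⁻ ω, ENNReal.ofReal (exp (Y ω)) ∂P ≤ 1) (t : ℝ) :
    P {ω | t ≤ Y ω} ≤ ENNReal.ofReal (exp (-t)) := calc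
  _ ≤ P {ω | ENNReal.ofReal (exp t) ≤ ENNReal.ofReal (exp (Y ω))} :=
    measure_mono fun ω (hω : t ≤ Y ω) ↦ ENNReal.ofReal_le_ofReal (exp_le_exp.2 hω)
  _ ≤ (∫⁻ ω, ENNReal.ofReal (exp (Y ω)) ∂P) / ENNReal.ofReal (exp t) :=
    meas_ge_le_lintegral_div (by fun_prop) (by simp [exp_pos]) ENNReal.ofReal_ne_top
  _ ≤ 1 / ENNReal.ofReal (exp t) := by gcongr
  _ = ENNReal.ofReal (exp (-t)) := by
    rw [one_div, ← ENNReal.ofReal_inv_of_pos (exp_pos t), exp_neg]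

lemma chernoff_exponent_pos {t I ε ρ c : ℝ} (ht : 0 < t) (hε : 0 < ε) (hρ : ρ ∈ Set.Ioc (0 : ℝ) 1)
    (hc : c < t * (-I + ε)) : 0 < t * (ε - ρ * I) - ρ * c := by
  obtain ⟨hρ₀, hρ₁⟩ := hρ
  rcases le_or_gt (t * I + c) 0 with h | h
  · nlinarith [mul_nonpos_of_nonneg_of_nonpos hρ₀.le h]
  · nlinarith [mul_le_mul_of_nonneg_right hρ₁ h.le]

lemma mul_chernoff_exponent_le_sum {n : ℕ} (hn : 1 ≤ n) {a b r s : ℕ → ℝ} {t c ρ I ε : ℝ}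
    (ht : 0 < t) (hc : c ≤ 0)
    (hΛ : ∑ m ∈ Finset.Icc 1 n, a m * r m - ∑ m ∈ Finset.Icc 1 n, b m * s m < n * (ρ * I - ε))
    (hπ : ρ ≤ (∑ m ∈ Finset.Icc 1 n, r m) / n) :
    n * (t * (ε - ρ * I) - ρ * c) ≤
      ∑ m ∈ Finset.Icc 1 n, (r m * (t * -a m - c) + s m * (t * b m)) := by
  have hn₀ : (0 : ℝ) < n := by exact_mod_cast hn
  rw [le_div_iff₀ hn₀] at hπ
  have hsum : ∑ m ∈ Finset.Icc 1 n, (r m * (t * -a m - c) + s m * (t * b m)) =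
      -t * (∑ m ∈ Finset.Icc 1 n, a m * r m - ∑ m ∈ Finset.Icc 1 n, b m * s m)
        - c * ∑ m ∈ Finset.Icc 1 n, r m := by
    simp only [Finset.mul_sum, ← Finset.sum_sub_distrib]
    exact Finset.sum_congr rfl fun m _ ↦ by ring
  rw [hsum]
  nlinarith

lemma mem_Icc_of_eq_zero_or_eq_one {x : ℝ} (h : x = 0 ∨ x = 1) : x ∈ Set.Icc (0 : ℝ) 1 := by
  rcases h with rfl | rfl <;> simp

theorem stmt_3_general {Ω : Type*} [mΩ : MeasurableSpace Ω] (P : Measure Ω) [IsProbabilityMeasure P]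
    {S₁ S₂ : Type*} [mS₁ : MeasurableSpace S₁] [mS₂ : MeasurableSpace S₂]
    (μ0₁ μ1₁ : Measure S₁) (μ0₂ μ1₂ : Measure S₂)
    [IsProbabilityMeasure μ0₁] [IsProbabilityMeasure μ1₁]
    [IsProbabilityMeasure μ0₂] [IsProbabilityMeasure μ1₂]
    -- I := KL(μ1⁽¹⁾‖μ0⁽¹⁾) and J := KL(μ0⁽²⁾‖μ1⁽²⁾) are finite and positive
    (hac1 : μ1₁ ≪ μ0₁) (hac2 : μ0₂ ≪ μ1₂)
    (hint1 : Integrable (llr μ1₁ μ0₁) μ1₁)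
    (I : ℝ) (hI : I = ∫ x, llr μ1₁ μ0₁ x ∂μ1₁)
    -- the filtration
    (F : Filtration ℕ mΩ)
    -- the observations: (X_n, Y_n) i.i.d. with law μ1⁽¹⁾ ⊗ μ0⁽²⁾ (in particular the two
    -- sequences are independent of each other), adapted and independent of the past
    (X : ℕ → Ω → S₁) (Y : ℕ → Ω → S₂)
    (hXYmeas : ∀ n, 1 ≤ n → Measurable[F n] (fun ω => (X n ω, Y n ω)))
    (hXYlaw : ∀ n, 1 ≤ n → Measure.map (fun ω => (X n ω, Y n ω)) P = μ1₁.prod μ0₂)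
    (hXYindep : ∀ n, 1 ≤ n →
      Indep (MeasurableSpace.comap (fun ω => (X n ω, Y n ω)) (mS₁.prod mS₂)) (F (n - 1)) P)
    -- the sampling indicators, previsible and {0,1}-valued
    (R S : ℕ → Ω → ℝ)
    (hR01 : ∀ n ω, R n ω = 0 ∨ R n ω = 1) (hS01 : ∀ n ω, S n ω = 0 ∨ S n ω = 1)
    (hRmeas : ∀ n, 1 ≤ n → Measurable[F (n - 1)] (R n))
    (hSmeas : ∀ n, 1 ≤ n → Measurable[F (n - 1)] (S n))
    (ρ ε : ℝ) (hρ : ρ ∈ Set.Ioc (0:ℝ) 1) (hε : 0 < ε) :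
    -- the sequence n ↦ P(Λ(n) < n(ρI - ε), π_X(n) ≥ ρ) is exponentially decaying
    ∃ c > (0:ℝ), ∃ d > (0:ℝ), ∀ n : ℕ, 1 ≤ n →
      P {ω | ((∑ m ∈ Finset.Icc 1 n, llr μ1₁ μ0₁ (X m ω) * R m ω)
              - (∑ m ∈ Finset.Icc 1 n, llr μ1₂ μ0₂ (Y m ω) * S m ω)) < n * (ρ * I - ε) ∧
             ρ ≤ (∑ m ∈ Finset.Icc 1 n, R m ω) / n}
        ≤ ENNReal.ofReal (c * Real.exp (-d * n)) := by
  set u : S₁ → ℝ := fun x ↦ -llr μ1₁ μ0₁ x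
  have hu : ∫⁻ x, ENNReal.ofReal (exp (u x)) ∂μ1₁ ≤ 1 :=
    lintegral_exp_le_one_of_ae_eq_rnDeriv (exp_neg_llr hac1)
  have hv : ∫⁻ y, ENNReal.ofReal (exp (llr μ1₂ μ0₂ y)) ∂μ0₂ ≤ 1 :=
    lintegral_exp_le_one_of_ae_eq_rnDeriv (exp_llr_of_ac' μ1₂ μ0₂ hac2)
  have hIu : ∫ x, u x ∂μ1₁ = -I := by rw [integral_neg, hI]
  obtain ⟨t, ⟨ht₀, ht₁⟩, hcgf⟩ := exists_cgf_lt (u := u) hint1.neg hu hε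
  rw [hIu] at hcgf
  set c := cgf u μ1₁ t
  have hc₀ : c ≤ 0 := cgf_nonpos hu ht₀.le ht₁
  set f : ℝ × ℝ → S₁ × S₂ → ℝ := fun r p ↦ r.1 * (t * u p.1 - c) + r.2 * (t * llr μ1₂ μ0₂ p.2)
  have hf : Measurable (Function.uncurry f) := by fun_prop
  have hRS : ∀ m, 1 ≤ m → Measurable[F (m - 1)] fun ω ↦ (R m ω, S m ω) :=
    fun m hm ↦ (hRmeas m hm).prodMk (hSmeas m hm)
  have hmean := lintegral_exp_sum_le_one F hf hXYmeas hRS hXYindep fun m hm ω ↦ by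
    rw [hXYlaw m hm]
    exact lintegral_prod_exp_mul_add_mul_le_one (by fun_prop) (by fun_prop)
      (lintegral_exp_mul_sub_cgf (integrable_exp_mul (by fun_prop) hu ht₀.le ht₁)).le
      (lintegral_exp_mul_le_one hv ht₀.le ht₁) (mem_Icc_of_eq_zero_or_eq_one (hR01 m ω))
      (mem_Icc_of_eq_zero_or_eq_one (hS01 m ω))
  refine ⟨1, one_pos, _, chernoff_exponent_pos ht₀ hε hρ hcgf, fun n hn ↦ ?_⟩
  calc P _ ≤ P {ω | n * (t * (ε - ρ * I) - ρ * c) ≤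
        ∑ m ∈ Finset.Icc 1 n, f (R m ω, S m ω) (X m ω, Y m ω)} :=
        measure_mono fun _ hω ↦ mul_chernoff_exponent_le_sum hn ht₀ hc₀ hω.1 hω.2
    _ ≤ _ := measure_le_le_exp_neg_of_lintegral_exp_le_one
        ((measurable_sum_Icc_comp F hf hXYmeas hRS n).mono (F.le n) le_rfl).aemeasurable
        (hmean n) _
    _ = _ := by ring_nf

theorem stmt_3 {Ω : Type*} [mΩ : MeasurableSpace Ω] (P : Measure Ω) [IsProbabilityMeasure P]
    {S₁ S₂ : Type*} [mS₁ : MeasurableSpace S₁] [mS₂ : MeasurableSpace S₂]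
    (μ0₁ μ1₁ : Measure S₁) (μ0₂ μ1₂ : Measure S₂)
    [IsProbabilityMeasure μ0₁] [IsProbabilityMeasure μ1₁]
    [IsProbabilityMeasure μ0₂] [IsProbabilityMeasure μ1₂]
    -- I := KL(μ1⁽¹⁾‖μ0⁽¹⁾) and J := KL(μ0⁽²⁾‖μ1⁽²⁾) are finite and positive
    (hac1 : μ1₁ ≪ μ0₁) (hac2 : μ0₂ ≪ μ1₂)
    (hint1 : Integrable (llr μ1₁ μ0₁) μ1₁) (hint2 : Integrable (llr μ0₂ μ1₂) μ0₂)
    (I : ℝ) (hI : I = ∫ x, llr μ1₁ μ0₁ x ∂μ1₁) (hIpos : 0 < I)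
    (J : ℝ) (hJ : J = ∫ x, llr μ0₂ μ1₂ x ∂μ0₂) (hJpos : 0 < J)
    -- the filtration
    (F : Filtration ℕ mΩ)
    -- the observations: (X_n, Y_n) i.i.d. with law μ1⁽¹⁾ ⊗ μ0⁽²⁾ (in particular the two
    -- sequences are independent of each other), adapted and independent of the past
    (X : ℕ → Ω → S₁) (Y : ℕ → Ω → S₂)
    (hXYmeas : ∀ n, 1 ≤ n → Measurable[F n] (fun ω => (X n ω, Y n ω)))
    (hXYlaw : ∀ n, 1 ≤ n → Measure.map (fun ω => (X n ω, Y n ω)) P = μ1₁.prod μ0₂)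
    (hXYiid : iIndepFun (m := fun _ => mS₁.prod mS₂) (fun n ω => (X n ω, Y n ω)) P)
    (hXYindep : ∀ n, 1 ≤ n →
      Indep (MeasurableSpace.comap (fun ω => (X n ω, Y n ω)) (mS₁.prod mS₂)) (F (n - 1)) P)
    -- the sampling indicators, previsible and {0,1}-valued
    (R S : ℕ → Ω → ℝ)
    (hR01 : ∀ n ω, R n ω = 0 ∨ R n ω = 1) (hS01 : ∀ n ω, S n ω = 0 ∨ S n ω = 1)
    (hRmeas : ∀ n, 1 ≤ n → Measurable[F (n - 1)] (R n))
    (hSmeas : ∀ n, 1 ≤ n → Measurable[F (n - 1)] (S n))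
    (ρ ε : ℝ) (hρ : ρ ∈ Set.Ioc (0:ℝ) 1) (hε : 0 < ε) :
    -- the sequence n ↦ P(Λ(n) < n(ρI - ε), π_X(n) ≥ ρ) is exponentially decaying
    ∃ c > (0:ℝ), ∃ d > (0:ℝ), ∀ n : ℕ, 1 ≤ n →
      P {ω | ((∑ m ∈ Finset.Icc 1 n, llr μ1₁ μ0₁ (X m ω) * R m ω)
              - (∑ m ∈ Finset.Icc 1 n, llr μ1₂ μ0₂ (Y m ω) * S m ω)) < n * (ρ * I - ε) ∧
             ρ ≤ (∑ m ∈ Finset.Icc 1 n, R m ω) / n}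
        ≤ ENNReal.ofReal (c * Real.exp (-d * n)) :=
  stmt_3_general (mΩ := mΩ) P (mS₁ := mS₁) (mS₂ := mS₂) μ0₁ μ1₁ μ0₂ μ1₂ hac1 hac2 hint1 I hI F X Y
    hXYmeas hXYlaw hXYindep R S hR01 hS01 hRmeas hSmeas ρ ε hρ hε
end

section
/- The maximum of min_{i∈A}(c_i·I_i) + min_{j∉A}(c_j·J_j) over all vectors c = (c_1,…,c_M) ∈ [0,1]^M with ∑_{i=1}^M c_i ≤ K equals the maximum of p·I*_A + q·J*_A over all pairs (p,q) ∈ [0,1]² with p·K̂_A + q·Ǩ_A ≤ K, for any real K > 0. -/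
/-!
A vector `c` enters the objective only through the two block minima
`m = min_{i ∈ A} c_i I_i` and `n = min_{j ∉ A} c_j J_j`. Given `c`, the scales `p = m / I*_A`,
`q = n / J*_A` reach the same value at no greater budget, since `c_i ≥ m / I_i` on `A` and
`c_j ≥ n / J_j` off `A`. Conversely `(p, q)` is realised by `c_i = p I*_A / I_i` on `A` and
`c_j = q J*_A / J_j` off `A`, which spends exactly `p K̂_A + q Ǩ_A`. So both problems attain the
same set of values, and the two-dimensional one has a maximum by compactness.
-/

open Finset

namespace MaxMinBudget

variable {ι : Type*} {s : Finset ι} (hs : s.Nonempty) {I : ι → ℝ}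

lemma exists_scale_of_weights (hI : ∀ i ∈ s, 0 < I i) {c : ι → ℝ}
    (hc : ∀ i ∈ s, c i ∈ Set.Icc (0 : ℝ) 1) :
    ∃ p ∈ Set.Icc (0 : ℝ) 1, p * ∑ i ∈ s, s.inf' hs I / I i ≤ ∑ i ∈ s, c i ∧
      p * s.inf' hs I = s.inf' hs fun i => c i * I i := by
  set m := s.inf' hs fun i => c i * I i
  have hIs : 0 < s.inf' hs I := (lt_inf'_iff hs).2 hI
  have hm_le : ∀ i ∈ s, m ≤ c i * I i := fun i hi => inf'_le _ hi
  have hm_nonneg : 0 ≤ m := le_inf' hs _ fun i hi => mul_nonneg (hc i hi).1 (hI i hi).le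
  have hm_le_inf : m ≤ s.inf' hs I := le_inf' hs _ fun i hi =>
    (hm_le i hi).trans (mul_le_of_le_one_left (hI i hi).le (hc i hi).2)
  refine ⟨m / s.inf' hs I, ⟨by positivity, (div_le_one hIs).2 hm_le_inf⟩, ?_,
    div_mul_cancel₀ _ hIs.ne'⟩
  rw [mul_sum]
  refine sum_le_sum fun i hi => ?_
  rw [div_mul_div_cancel₀ hIs.ne', div_le_iff₀ (hI i hi)]
  exact hm_le i hi

lemma exists_weights_of_scale (hI : ∀ i ∈ s, 0 < I i) {p : ℝ} (hp : p ∈ Set.Icc (0 : ℝ) 1) :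
    ∃ c : ι → ℝ, (∀ i ∈ s, c i ∈ Set.Icc (0 : ℝ) 1) ∧
      ∑ i ∈ s, c i = p * ∑ i ∈ s, s.inf' hs I / I i ∧
      (s.inf' hs fun i => c i * I i) = p * s.inf' hs I := by
  have hIs : 0 < s.inf' hs I := (lt_inf'_iff hs).2 hI
  refine ⟨fun i => p * s.inf' hs I / I i, fun i hi => ⟨?_, ?_⟩, ?_, ?_⟩
  · exact div_nonneg (mul_nonneg hp.1 hIs.le) (hI i hi).le
  · rw [div_le_one (hI i hi)]
    exact (mul_le_of_le_one_left hIs.le hp.2).trans (inf'_le _ hi)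
  · simp only [mul_sum, mul_div_assoc]
  · rw [inf'_congr hs rfl fun i hi => div_mul_cancel₀ _ (hI i hi).ne']
    exact inf'_const hs _

end MaxMinBudget

open MaxMinBudget in
theorem setOf_maxMin_eq_setOf_scales {ι : Type*} [Fintype ι] [DecidableEq ι] (A : Finset ι)
    (hA : A.Nonempty) (hAc : Aᶜ.Nonempty) {I J : ι → ℝ} (hI : ∀ i ∈ A, 0 < I i)
    (hJ : ∀ j ∈ Aᶜ, 0 < J j) (K : ℝ) :
    {w : ℝ | ∃ c : ι → ℝ, (∀ i, c i ∈ Set.Icc (0 : ℝ) 1) ∧ ∑ i, c i ≤ K ∧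
        w = (A.inf' hA fun i => c i * I i) + Aᶜ.inf' hAc fun j => c j * J j} =
      {w : ℝ | ∃ p q : ℝ, p ∈ Set.Icc (0 : ℝ) 1 ∧ q ∈ Set.Icc (0 : ℝ) 1 ∧
        p * ∑ i ∈ A, A.inf' hA I / I i + q * ∑ j ∈ Aᶜ, Aᶜ.inf' hAc J / J j ≤ K ∧
        w = p * A.inf' hA I + q * Aᶜ.inf' hAc J} := by
  ext w
  constructor
  · rintro ⟨c, hc, hsum, rfl⟩
    obtain ⟨p, hp, hp_sum, hp_val⟩ := exists_scale_of_weights hA hI fun i _ => hc i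
    obtain ⟨q, hq, hq_sum, hq_val⟩ := exists_scale_of_weights hAc hJ fun i _ => hc i
    refine ⟨p, q, hp, hq, ?_, by rw [hp_val, hq_val]⟩
    rw [← sum_add_sum_compl A c] at hsum
    linarith
  · rintro ⟨p, q, hp, hq, hle, rfl⟩
    obtain ⟨a, ha, ha_sum, ha_val⟩ := exists_weights_of_scale hA hI hp
    obtain ⟨b, hb, hb_sum, hb_val⟩ := exists_weights_of_scale hAc hJ hq
    have h_on : ∀ i ∈ A, A.piecewise a b i = a i := fun i hi => piecewise_eq_of_mem _ _ _ hi
    have h_off : ∀ j ∈ Aᶜ, A.piecewise a b j = b j :=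
      fun j hj => piecewise_eq_of_notMem _ _ _ (mem_compl.1 hj)
    refine ⟨A.piecewise a b, fun i => ?_, ?_, ?_⟩
    · by_cases hi : i ∈ A
      · exact h_on i hi ▸ ha i hi
      · exact h_off i (mem_compl.2 hi) ▸ hb i (mem_compl.2 hi)
    · rwa [← sum_add_sum_compl A, sum_congr rfl h_on, sum_congr rfl h_off, ha_sum, hb_sum]
    · rw [inf'_congr hA rfl (g := fun i => a i * I i) fun i hi =>
          congrArg (· * I i) (h_on i hi),
        inf'_congr hAc rfl (g := fun j => b j * J j) fun j hj =>
          congrArg (· * J j) (h_off j hj),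
        ha_val, hb_val]

theorem exists_isGreatest_linear_of_box (a b k l K : ℝ) (hK : 0 ≤ K) :
    ∃ v, IsGreatest {w : ℝ | ∃ p q : ℝ, p ∈ Set.Icc (0 : ℝ) 1 ∧ q ∈ Set.Icc (0 : ℝ) 1 ∧
      p * k + q * l ≤ K ∧ w = p * a + q * b} v := by
  set T : Set (ℝ × ℝ) := Set.Icc 0 1 ×ˢ Set.Icc 0 1 ∩ {x | x.1 * k + x.2 * l ≤ K}
  have hT : IsCompact T :=
    (isCompact_Icc.prod isCompact_Icc).inter_right (isClosed_le (by fun_prop) continuous_const)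
  have hT_ne : T.Nonempty := ⟨(0, 0), by simp [T, hK]⟩
  have h_image : {w : ℝ | ∃ p q : ℝ, p ∈ Set.Icc (0 : ℝ) 1 ∧ q ∈ Set.Icc (0 : ℝ) 1 ∧
      p * k + q * l ≤ K ∧ w = p * a + q * b} = (fun x : ℝ × ℝ => x.1 * a + x.2 * b) '' T := by
    ext w
    constructor
    · rintro ⟨p, q, hp, hq, hle, rfl⟩
      exact ⟨(p, q), ⟨⟨hp, hq⟩, hle⟩, rfl⟩
    · rintro ⟨⟨p, q⟩, ⟨⟨hp, hq⟩, hle⟩, rfl⟩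
      exact ⟨p, q, hp, hq, hle, rfl⟩
  rw [h_image]
  exact (hT.image (by fun_prop)).exists_isGreatest (hT_ne.image _)

theorem stmt_9_general (M : ℕ) (A : Finset (Fin M))
    (hA : A.Nonempty) (hAc : Aᶜ.Nonempty)
    (I J : Fin M → ℝ) (hI : ∀ i ∈ A, 0 < I i) (hJ : ∀ j ∈ Aᶜ, 0 < J j)
    (K : ℝ) (hK : 0 < K)
    (Istar Jstar Khat Kcheck : ℝ)
    (hIstar : Istar = A.inf' hA I) (hJstar : Jstar = Aᶜ.inf' hAc J)
    (hKhat : Khat = ∑ i ∈ A, Istar / I i) (hKcheck : Kcheck = ∑ j ∈ Aᶜ, Jstar / J j) :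
    ∃ v : ℝ,
      IsGreatest {w : ℝ | ∃ c : Fin M → ℝ, (∀ i, c i ∈ Set.Icc (0:ℝ) 1) ∧ (∑ i, c i) ≤ K ∧
          w = (A.inf' hA fun i => c i * I i) + (Aᶜ.inf' hAc fun j => c j * J j)} v ∧
      IsGreatest {w : ℝ | ∃ p q : ℝ, p ∈ Set.Icc (0:ℝ) 1 ∧ q ∈ Set.Icc (0:ℝ) 1 ∧
          p * Khat + q * Kcheck ≤ K ∧ w = p * Istar + q * Jstar} v := by
  subst hKhat hKcheck hIstar hJstar
  obtain ⟨v, hv⟩ := exists_isGreatest_linear_of_box _ _ _ _ K hK.le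
  exact ⟨v, setOf_maxMin_eq_setOf_scales A hA hAc hI hJ K ▸ hv, hv⟩

theorem stmt_9 (M : ℕ) (hM : 2 ≤ M) (A : Finset (Fin M))
    (hA : A.Nonempty) (hAc : Aᶜ.Nonempty)
    (I J : Fin M → ℝ) (hI : ∀ i ∈ A, 0 < I i) (hJ : ∀ j ∈ Aᶜ, 0 < J j)
    (K : ℝ) (hK : 0 < K)
    (Istar Jstar Khat Kcheck : ℝ)
    (hIstar : Istar = A.inf' hA I) (hJstar : Jstar = Aᶜ.inf' hAc J)
    (hKhat : Khat = ∑ i ∈ A, Istar / I i) (hKcheck : Kcheck = ∑ j ∈ Aᶜ, Jstar / J j) :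
    ∃ v : ℝ,
      IsGreatest {w : ℝ | ∃ c : Fin M → ℝ, (∀ i, c i ∈ Set.Icc (0:ℝ) 1) ∧ (∑ i, c i) ≤ K ∧
          w = (A.inf' hA fun i => c i * I i) + (Aᶜ.inf' hAc fun j => c j * J j)} v ∧
      IsGreatest {w : ℝ | ∃ p q : ℝ, p ∈ Set.Icc (0:ℝ) 1 ∧ q ∈ Set.Icc (0:ℝ) 1 ∧
          p * Khat + q * Kcheck ≤ K ∧ w = p * Istar + q * Jstar} v :=
  stmt_9_general M A hA hAc I J hI hJ K hK Istar Jstar Khat Kcheck hIstar hJstar hKhat hKcheck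
end

section
/- Let K > 0 and r > 0. The maximum of min{p·I*_A, r·q·J*_A} over all (p,q) ∈ [0,1]² with p·K̂_A + q·Ǩ_A ≤ K equals x·I*_A, which also equals r·y·J*_A, where x := min{K/(K̂_A + (θ_A/r)·Ǩ_A), r/θ_A, 1} and y := min{K/(Ǩ_A + (r/θ_A)·K̂_A), θ_A/r, 1}. -/
/-! Writing `a = I*_A`, `b = r J*_A`, the problem is to maximize `min (p a) (q b)` over
`p, q ∈ [0, 1]` with `p c + q d ≤ K`. Any feasible value `w` has `w / a ≤ p` and `w / b ≤ q`,
so `w ≤ a`, `w ≤ b` and `w (c / a + d / b) ≤ K`; conversely the largest `t` meeting these three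
bounds is attained at `p = t / a`, `q = t / b`. Both `x I*_A` and `r y J*_A` are this `t`,
expressed in the units of `p` and of `q` respectively. -/

open Finset

theorem isGreatest_min_mul_of_budget {a b c d K : ℝ} (ha : 0 < a) (hb : 0 < b)
    (hc : 0 < c) (hd : 0 < d) (hK : 0 ≤ K) :
    IsGreatest {w : ℝ | ∃ p q : ℝ, p ∈ Set.Icc (0:ℝ) 1 ∧ q ∈ Set.Icc (0:ℝ) 1 ∧
        p * c + q * d ≤ K ∧ w = min (p * a) (q * b)}
      (min (K / (c / a + d / b)) (min b a)) := by
  set D := c / a + d / b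
  have hD : 0 < D := by positivity
  set t := min (K / D) (min b a)
  have ht0 : 0 ≤ t := le_min (by positivity) (le_min hb.le ha.le)
  have htK : t ≤ K / D := min_le_left _ _
  have htb : t ≤ b := (min_le_right _ _).trans (min_le_left _ _)
  have hta : t ≤ a := (min_le_right _ _).trans (min_le_right _ _)
  constructor
  · refine ⟨t / a, t / b, ⟨by positivity, (div_le_one ha).2 hta⟩,
      ⟨by positivity, (div_le_one hb).2 htb⟩, ?_, ?_⟩
    · calc t / a * c + t / b * d = t * D := by simp only [D]; ring
        _ ≤ K := (le_div_iff₀ hD).1 htK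
    · rw [div_mul_cancel₀ _ ha.ne', div_mul_cancel₀ _ hb.ne', min_self]
  · rintro _ ⟨p, q, ⟨-, hp1⟩, ⟨-, hq1⟩, hbudget, rfl⟩
    set w := min (p * a) (q * b)
    have hwp : w / a ≤ p := (div_le_iff₀ ha).2 (min_le_left _ _)
    have hwq : w / b ≤ q := (div_le_iff₀ hb).2 (min_le_right _ _)
    refine le_min ((le_div_iff₀ hD).2 ?_) (le_min ?_ ?_)
    · calc w * D = w / a * c + w / b * d := by simp only [D]; ring
        _ ≤ p * c + q * d := by gcongr
        _ ≤ K := hbudget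
    · exact (div_le_one hb).1 (hwq.trans hq1)
    · exact (div_le_one ha).1 (hwp.trans hp1)

theorem min_div_add_mul_mul_eq {a b : ℝ} (ha : 0 < a) (hb : 0 < b) (c d K : ℝ) :
    min (K / (c + a / b * d)) (min (b / a) 1) * a = min (K / (c / a + d / b)) (min b a) := by
  rw [min_mul_of_nonneg _ _ ha.le, min_mul_of_nonneg _ _ ha.le, div_mul_cancel₀ _ ha.ne',
    one_mul]
  congr 1
  field_simp

theorem stmt_12_general (M : ℕ) (A : Finset (Fin M))
    (hA : A.Nonempty) (hAc : Aᶜ.Nonempty)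
    (I J : Fin M → ℝ) (hI : ∀ i ∈ A, 0 < I i) (hJ : ∀ j ∈ Aᶜ, 0 < J j)
    (K r : ℝ) (hK0 : 0 < K) (hr : 0 < r)
    (Istar Jstar Khat Kcheck θ x y : ℝ)
    (hIstar : Istar = A.inf' hA I) (hJstar : Jstar = Aᶜ.inf' hAc J)
    (hKhat : Khat = ∑ i ∈ A, Istar / I i) (hKcheck : Kcheck = ∑ j ∈ Aᶜ, Jstar / J j)
    (hθ : θ = Istar / Jstar)
    (hx : x = min (K / (Khat + (θ / r) * Kcheck)) (min (r / θ) 1))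
    (hy : y = min (K / (Kcheck + (r / θ) * Khat)) (min (θ / r) 1)) :
    IsGreatest {w : ℝ | ∃ p q : ℝ, p ∈ Set.Icc (0:ℝ) 1 ∧ q ∈ Set.Icc (0:ℝ) 1 ∧
        p * Khat + q * Kcheck ≤ K ∧ w = min (p * Istar) (r * (q * Jstar))}
      (x * Istar) ∧
    x * Istar = r * (y * Jstar) := by
  have hIs : 0 < Istar := hIstar ▸ (lt_inf'_iff hA).2 hI
  have hJs : 0 < Jstar := hJstar ▸ (lt_inf'_iff hAc).2 hJ
  have hrJs : 0 < r * Jstar := mul_pos hr hJs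
  have hθr : θ / r = Istar / (r * Jstar) := by rw [hθ, div_div, mul_comm]
  have hrθ : r / θ = r * Jstar / Istar := by rw [hθ, div_div_eq_mul_div]
  have hxv := min_div_add_mul_mul_eq hIs hrJs Khat Kcheck K
  have hyv := min_div_add_mul_mul_eq hrJs hIs Kcheck Khat K
  rw [← hθr, ← hrθ, ← hx] at hxv
  rw [← hθr, ← hrθ, ← hy, add_comm, min_comm Istar] at hyv
  refine ⟨?_, by rw [hxv, ← hyv]; ring⟩
  rw [hxv]
  convert isGreatest_min_mul_of_budget hIs hrJs
    (hKhat ▸ sum_pos (fun i hi => div_pos hIs (hI i hi)) hA)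
    (hKcheck ▸ sum_pos (fun j hj => div_pos hJs (hJ j hj)) hAc) hK0.le using 9
  rw [mul_left_comm r]

theorem stmt_12 (M : ℕ) (hM : 2 ≤ M) (A : Finset (Fin M))
    (hA : A.Nonempty) (hAc : Aᶜ.Nonempty)
    (I J : Fin M → ℝ) (hI : ∀ i ∈ A, 0 < I i) (hJ : ∀ j ∈ Aᶜ, 0 < J j)
    (K r : ℝ) (hK0 : 0 < K) (hr : 0 < r)
    (Istar Jstar Khat Kcheck θ x y : ℝ)
    (hIstar : Istar = A.inf' hA I) (hJstar : Jstar = Aᶜ.inf' hAc J)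
    (hKhat : Khat = ∑ i ∈ A, Istar / I i) (hKcheck : Kcheck = ∑ j ∈ Aᶜ, Jstar / J j)
    (hθ : θ = Istar / Jstar)
    (hx : x = min (K / (Khat + (θ / r) * Kcheck)) (min (r / θ) 1))
    (hy : y = min (K / (Kcheck + (r / θ) * Khat)) (min (θ / r) 1)) :
    IsGreatest {w : ℝ | ∃ p q : ℝ, p ∈ Set.Icc (0:ℝ) 1 ∧ q ∈ Set.Icc (0:ℝ) 1 ∧
        p * Khat + q * Kcheck ≤ K ∧ w = min (p * Istar) (r * (q * Jstar))}
      (x * Istar) ∧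
    x * Istar = r * (y * Jstar) :=
  stmt_12_general M A hA hAc I J hI hJ K r hK0 hr Istar Jstar Khat Kcheck θ x y hIstar hJstar hKhat
    hKcheck hθ hx hy
end

section
/- (Theorem 1, case of no prior information ℓ = 0, u = M.) Suppose there exists ρ > 0 such that, for every i ∈ A, the sequence n ↦ P_A(π_i(n) < ρ) is exponentially decaying, and, for every i ∉ A, the sequence n ↦ P_A(π_i(n) < ρ) is exponentially decaying. Then the sequence n ↦ P_A(σ_A > n) is exponentially decaying. -/
/-
Source `i` is misclassified at time `n` only if `Λ_i(n) ≤ 0` while `i ∈ A`, or `Λ_i(n) > 0` while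
`i ∉ A`. Outside the event `π_i(n) < ρ`, whose probability decays exponentially by assumption,
this forces `∑_{k ≤ n} g(X_i(k)) R_i(k) ≥ 0` with `g = ∓ llr / 2` together with at least `ρ n`
samples. A Chernoff bound controls this event: since `R_i(k)` is previsible and `X_i(k)` is
independent of the past, the product `∏_{k ≤ n} (R_i(k) e^{g(X_i(k))} + (1 - R_i(k)) r)` has mean
`r^n`, where `r = E e^{g}` is the Bhattacharyya coefficient of `μ1_i` and `μ0_i`, which is `< 1`
because the two laws differ. Markov's inequality then gives the bound `r^{ρ n}`. Summing over the
finitely many sources and over all times `m ≥ n` keeps the decay exponential.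
-/

open MeasureTheory ProbabilityTheory Real Finset

noncomputable def bhattacharyya {T : Type*} [MeasurableSpace T] (p q : Measure T) : ℝ :=
  ∫ x, √(p.rnDeriv q x).toReal ∂q

section Bhattacharyya

variable {T : Type*} [MeasurableSpace T] {p q : Measure T}

lemma sqrt_le_one_add_div_two {x : ℝ} (hx : 0 ≤ x) : √x ≤ (1 + x) / 2 := by
  nlinarith [sq_nonneg (√x - 1), sq_sqrt hx]

lemma integrable_one_add_rnDeriv_div_two [IsFiniteMeasure p] [IsFiniteMeasure q] :
    Integrable (fun x => (1 + (p.rnDeriv q x).toReal) / 2) q :=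
  ((integrable_const 1).add Measure.integrable_toReal_rnDeriv).div_const 2

lemma integrable_sqrt_rnDeriv [IsFiniteMeasure p] [IsFiniteMeasure q] :
    Integrable (fun x => √(p.rnDeriv q x).toReal) q :=
  integrable_one_add_rnDeriv_div_two.mono'
    (Measure.measurable_rnDeriv p q).ennreal_toReal.sqrt.aestronglyMeasurable
    (.of_forall fun x => by
      rw [norm_of_nonneg (sqrt_nonneg _)]
      exact sqrt_le_one_add_div_two ENNReal.toReal_nonneg)

lemma integral_exp_half_llr [IsFiniteMeasure p] [IsFiniteMeasure q] (hqp : q ≪ p) :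
    Integrable (fun x => exp (llr p q x / 2)) q ∧
      ∫ x, exp (llr p q x / 2) ∂q = bhattacharyya p q := by
  have h : (fun x => exp (llr p q x / 2)) =ᵐ[q] fun x => √(p.rnDeriv q x).toReal := by
    filter_upwards [exp_llr_of_ac' p q hqp] with x hx
    rw [exp_half, hx]
  exact ⟨integrable_sqrt_rnDeriv.congr h.symm, integral_congr_ae h⟩

lemma integral_exp_neg_half_llr [IsFiniteMeasure p] [IsFiniteMeasure q] (hpq : p ≪ q) :
    Integrable (fun x => exp (-llr p q x / 2)) p ∧
      ∫ x, exp (-llr p q x / 2) ∂p = bhattacharyya p q := by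
  have h : ∀ x, (p.rnDeriv q x).toReal • exp (-llr p q x / 2) = √(p.rnDeriv q x).toReal := by
    intro x
    rw [llr, smul_eq_mul]
    rcases (ENNReal.toReal_nonneg (a := p.rnDeriv q x)).eq_or_lt with h0 | hpos
    · simp [← h0]
    · rw [neg_div, exp_neg, exp_half, exp_log hpos, ← div_eq_mul_inv, div_sqrt]
  refine ⟨(integrable_rnDeriv_smul_iff hpq).mp ?_, ?_⟩
  · simpa only [h] using integrable_sqrt_rnDeriv
  · rw [← integral_rnDeriv_smul hpq]
    simp only [h, bhattacharyya]

lemma bhattacharyya_lt_one [IsProbabilityMeasure p] [IsProbabilityMeasure q]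
    (hpq : p ≪ q) (hne : p ≠ q) : bhattacharyya p q < 1 := by
  set f : T → ℝ := fun x => (p.rnDeriv q x).toReal
  -- The gap `1 - bhattacharyya p q` is the integral of `(1 + f) / 2 - √f = (√f - 1)² / 2`.
  set gap : T → ℝ := fun x => (1 + f x) / 2 - √(f x)
  have hgap_nonneg : 0 ≤ gap := fun x =>
    sub_nonneg.mpr (sqrt_le_one_add_div_two ENNReal.toReal_nonneg)
  have hgap_int : Integrable gap q :=
    integrable_one_add_rnDeriv_div_two.sub integrable_sqrt_rnDeriv
  have hgap_eq : ∫ x, gap x ∂q = 1 - bhattacharyya p q := by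
    rw [integral_sub integrable_one_add_rnDeriv_div_two integrable_sqrt_rnDeriv, integral_div,
      integral_add (integrable_const 1) Measure.integrable_toReal_rnDeriv,
      Measure.integral_toReal_rnDeriv hpq]
    simp [bhattacharyya]
  have hgap_ne : ∫ x, gap x ∂q ≠ 0 := by
    rw [Ne, integral_eq_zero_iff_of_nonneg hgap_nonneg hgap_int]
    intro h0
    have hf_one : p.rnDeriv q =ᵐ[q] 1 := by
      filter_upwards [h0] with x hx
      have hx' : (√(f x) - 1) ^ 2 = 0 := by
        have := sq_sqrt (ENNReal.toReal_nonneg (a := p.rnDeriv q x))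
        simp only [gap, Pi.zero_apply] at hx
        nlinarith
      rw [Pi.one_apply, ← ENNReal.toReal_eq_one_iff, ← sqrt_eq_one]
      exact sub_eq_zero.mp (pow_eq_zero_iff two_ne_zero |>.mp hx')
    exact hne (by rw [← Measure.withDensity_rnDeriv_eq p q hpq, withDensity_congr_ae hf_one,
      withDensity_one])
  linarith [(integral_nonneg hgap_nonneg).lt_of_ne' hgap_ne]

lemma ne_of_integral_llr_pos [SigmaFinite p] (h : 0 < ∫ x, llr p q x ∂p) : p ≠ q := by
  rintro rfl
  rw [integral_congr_ae (llr_self p)] at h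
  simp at h

end Bhattacharyya

def ExpDecay (a : ℕ → ENNReal) : Prop :=
  ∃ c > (0:ℝ), ∃ d > (0:ℝ), ∀ n : ℕ, 1 ≤ n → a n ≤ ENNReal.ofReal (c * exp (-d * n))

namespace ExpDecay

variable {a b : ℕ → ENNReal}

lemma mono (hb : ExpDecay b) (hab : ∀ n, 1 ≤ n → a n ≤ b n) : ExpDecay a := by
  obtain ⟨c, hc, d, hd, h⟩ := hb
  exact ⟨c, hc, d, hd, fun n hn => (hab n hn).trans (h n hn)⟩

lemma add (ha : ExpDecay a) (hb : ExpDecay b) : ExpDecay (a + b) := by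
  obtain ⟨c, hc, d, hd, ha⟩ := ha
  obtain ⟨c', hc', d', hd', hb⟩ := hb
  refine ⟨c + c', by positivity, min d d', lt_min hd hd', fun n hn => ?_⟩
  calc a n + b n ≤ ENNReal.ofReal (c * exp (-d * n)) + ENNReal.ofReal (c' * exp (-d' * n)) :=
        add_le_add (ha n hn) (hb n hn)
    _ = ENNReal.ofReal (c * exp (-d * n) + c' * exp (-d' * n)) :=
        (ENNReal.ofReal_add (by positivity) (by positivity)).symm
    _ ≤ ENNReal.ofReal ((c + c') * exp (-min d d' * n)) := by
        gcongr ENNReal.ofReal ?_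
        rw [add_mul]
        gcongr
        exacts [min_le_left _ _, min_le_right _ _]

lemma sum {ι : Type*} (s : Finset ι) {a : ι → ℕ → ENNReal} (h : ∀ i ∈ s, ExpDecay (a i)) :
    ExpDecay (fun n => ∑ i ∈ s, a i n) := by
  classical
  induction s using Finset.induction_on with
  | empty => exact ⟨1, one_pos, 1, one_pos, fun n _ => by simp⟩
  | insert i s hi ih =>
    simp only [Finset.sum_insert hi]
    exact (h i (mem_insert_self i s)).add (ih fun j hj => h j (mem_insert_of_mem hj))

lemma tsum_tail (ha : ExpDecay a) : ExpDecay (fun n => ∑' k, a (n + k)) := by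
  obtain ⟨c, hc, d, hd, h⟩ := ha
  set q := exp (-d)
  have hq1 : q < 1 := exp_lt_one_iff.mpr (by linarith)
  refine ⟨c * (1 - q)⁻¹, mul_pos hc (inv_pos.mpr (sub_pos.mpr hq1)), d, hd, fun n hn => ?_⟩
  calc ∑' k, a (n + k) ≤ ∑' k, ENNReal.ofReal (c * exp (-d * n)) * ENNReal.ofReal q ^ k := by
        refine ENNReal.tsum_le_tsum fun k => (h (n + k) (by omega)).trans_eq ?_
        rw [← ENNReal.ofReal_pow (exp_pos _).le, ← ENNReal.ofReal_mul (by positivity),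
          ← exp_nat_mul, mul_assoc, ← exp_add]
        push_cast
        ring_nf
    _ = ENNReal.ofReal (c * exp (-d * n)) * ENNReal.ofReal (1 - q)⁻¹ := by
        rw [ENNReal.tsum_mul_left, ENNReal.tsum_geometric,
          ENNReal.ofReal_inv_of_pos (sub_pos.mpr hq1),
          ENNReal.ofReal_sub _ (exp_pos _).le, ENNReal.ofReal_one]
    _ = ENNReal.ofReal (c * (1 - q)⁻¹ * exp (-d * n)) := by
        rw [← ENNReal.ofReal_mul (by positivity)]
        ring_nf

end ExpDecay

/-- `X n` is the observation of one source at time `n` and `R n ∈ {0, 1}` indicates whether that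
source is sampled at time `n`, a decision taken at time `n - 1`. -/
structure SampledIID {Ω T : Type*} [mΩ : MeasurableSpace Ω] [mT : MeasurableSpace T]
    (P : Measure Ω) (F : Filtration ℕ mΩ) (ν : Measure T) (X : ℕ → Ω → T) (R : ℕ → Ω → ℝ) :
    Prop where
  measurable_obs : ∀ n, 1 ≤ n → Measurable[F n] (X n)
  map_obs : ∀ n, 1 ≤ n → P.map (X n) = ν
  indep_obs : ∀ n, 1 ≤ n → Indep (MeasurableSpace.comap (X n) mT) (F (n - 1)) P
  sample_eq_zero_or_one : ∀ n ω, R n ω = 0 ∨ R n ω = 1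
  measurable_sample : ∀ n, 1 ≤ n → Measurable[F (n - 1)] (R n)

lemma norm_le_one_of_eq_zero_or_one {x : ℝ} (hx : x = 0 ∨ x = 1) : ‖x‖ ≤ 1 := by
  rcases hx with rfl | rfl <;> simp

lemma integral_mul_sampled_factor {Ω : Type*} {m mΩ : MeasurableSpace Ω} {P : Measure Ω}
    [IsProbabilityMeasure P] (hm : m ≤ mΩ) {W B G : Ω → ℝ}
    (hW : Measurable[m] W) (hWi : Integrable W P) (hB : Measurable[m] B)
    (hB01 : ∀ ω, B ω = 0 ∨ B ω = 1) (hG : Measurable G) (hGi : Integrable G P)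
    (hind : Indep (MeasurableSpace.comap G inferInstance) m P) :
    Integrable (fun ω => W ω * (B ω * G ω + (1 - B ω) * ∫ ω, G ω ∂P)) P ∧
      ∫ ω, W ω * (B ω * G ω + (1 - B ω) * ∫ ω, G ω ∂P) ∂P = (∫ ω, G ω ∂P) * ∫ ω, W ω ∂P := by
  set r := ∫ ω, G ω ∂P
  have hBm : Measurable B := hB.mono hm le_rfl
  have hWB : Integrable (fun ω => W ω * B ω) P :=
    hWi.mul_bdd hBm.aestronglyMeasurable
      (.of_forall fun ω => norm_le_one_of_eq_zero_or_one (hB01 ω))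
  have hWB' : Integrable (fun ω => W ω * (1 - B ω)) P :=
    hWi.mul_bdd (measurable_const.sub hBm).aestronglyMeasurable (.of_forall fun ω =>
      norm_le_one_of_eq_zero_or_one ((hB01 ω).symm.imp (by simp [·]) (by simp [·])))
  have hindep : IndepFun G (fun ω => W ω * B ω) P := by
    rw [IndepFun_iff_Indep]
    exact indep_of_indep_of_le_right hind (measurable_iff_comap_le.mp (hW.mul hB))
  have hsplit : (fun ω => W ω * (B ω * G ω + (1 - B ω) * r)) =
      fun ω => G ω * (W ω * B ω) + W ω * (1 - B ω) * r := by
    ext ω; ring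
  have hGWB : Integrable (fun ω => G ω * (W ω * B ω)) P := hindep.integrable_mul hGi hWB
  rw [hsplit]
  refine ⟨hGWB.add (hWB'.mul_const r), ?_⟩
  rw [integral_add hGWB (hWB'.mul_const r), integral_mul_const,
    hindep.integral_fun_mul_eq_mul_integral hG.aestronglyMeasurable hWB.aestronglyMeasurable]
  have hW_split : ∫ ω, W ω ∂P = ∫ ω, W ω * B ω ∂P + ∫ ω, W ω * (1 - B ω) ∂P := by
    rw [← integral_add hWB hWB']
    congr 1 with ω
    ring
  rw [hW_split]
  ring

namespace SampledIID

variable {Ω T : Type*} [mΩ : MeasurableSpace Ω] [mT : MeasurableSpace T] {P : Measure Ω}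
  {F : Filtration ℕ mΩ} {ν : Measure T} {X : ℕ → Ω → T} {R : ℕ → Ω → ℝ} {ρ : ℝ}

lemma measurable_prod_factor (h : SampledIID P F ν X R) {θ : T → ℝ} (hθ : Measurable θ) (r : ℝ)
    (n : ℕ) : Measurable[F n] fun ω => ∏ k ∈ Icc 1 n, (R k ω * θ (X k ω) + (1 - R k ω) * r) := by
  refine Finset.measurable_prod _ fun k hk => ?_
  obtain ⟨hk1, hkn⟩ := Finset.mem_Icc.mp hk
  have hR : Measurable[F n] (R k) := (h.measurable_sample k hk1).mono (F.mono (by omega)) le_rfl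
  have hX : Measurable[F n] (X k) := (h.measurable_obs k hk1).mono (F.mono hkn) le_rfl
  exact (hR.mul (hθ.comp hX)).add ((measurable_const.sub hR).mul measurable_const)

lemma integral_prod_factor [IsProbabilityMeasure P] (h : SampledIID P F ν X R) {θ : T → ℝ}
    (hθ : Measurable θ) (hθi : Integrable θ ν) (n : ℕ) :
    Integrable (fun ω => ∏ k ∈ Icc 1 n, (R k ω * θ (X k ω) + (1 - R k ω) * ∫ x, θ x ∂ν)) P ∧
      ∫ ω, ∏ k ∈ Icc 1 n, (R k ω * θ (X k ω) + (1 - R k ω) * ∫ x, θ x ∂ν) ∂P =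
        (∫ x, θ x ∂ν) ^ n := by
  induction n with
  | zero => simp
  | succ n ih =>
    have hn : 1 ≤ n + 1 := Nat.le_add_left 1 n
    have hX : Measurable (X (n + 1)) := (h.measurable_obs _ hn).mono (F.le _) le_rfl
    have hG : Integrable (fun ω => θ (X (n + 1) ω)) P := by
      refine (integrable_map_measure hθ.aestronglyMeasurable hX.aemeasurable).mp ?_
      rwa [h.map_obs _ hn]
    have hGr : ∫ ω, θ (X (n + 1) ω) ∂P = ∫ x, θ x ∂ν := by
      rw [← h.map_obs _ hn, integral_map hX.aemeasurable hθ.aestronglyMeasurable]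
    have hind :
        Indep (MeasurableSpace.comap (fun ω => θ (X (n + 1) ω)) inferInstance) (F n) P := by
      refine indep_of_indep_of_le_left (by simpa using h.indep_obs _ hn) ?_
      rw [show (fun ω => θ (X (n + 1) ω)) = θ ∘ X (n + 1) from rfl, ← MeasurableSpace.comap_comp]
      exact MeasurableSpace.comap_mono hθ.comap_le
    have hstep := integral_mul_sampled_factor (F.le n) (h.measurable_prod_factor hθ _ n) ih.1
      (by simpa using h.measurable_sample _ hn) (h.sample_eq_zero_or_one (n + 1))
      (G := fun ω => θ (X (n + 1) ω)) (hθ.comp hX) hG hind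
    simp only [hGr, ih.2] at hstep
    simp only [Finset.prod_Icc_succ_top hn]
    rw [pow_succ']
    exact hstep

lemma prod_factor_exp_eq (h : SampledIID P F ν X R) {g : T → ℝ} {r : ℝ} (hr : 0 < r) (n : ℕ)
    (ω : Ω) :
    ∏ k ∈ Icc 1 n, (R k ω * exp (g (X k ω)) + (1 - R k ω) * r) =
      exp (∑ k ∈ Icc 1 n, g (X k ω) * R k ω + (n - ∑ k ∈ Icc 1 n, R k ω) * log r) := by
  have hfactor : ∀ k, R k ω * exp (g (X k ω)) + (1 - R k ω) * r =
      exp (g (X k ω) * R k ω + (1 - R k ω) * log r) := fun k => by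
    rcases h.sample_eq_zero_or_one k ω with h0 | h1
    · simp [h0, exp_log hr]
    · simp [h1]
  simp only [hfactor, ← exp_sum, sum_add_distrib, ← sum_mul, sum_sub_distrib, sum_const,
    Nat.card_Icc, nsmul_eq_mul, add_tsub_cancel_right, mul_one]

lemma measure_sum_nonneg_le [IsProbabilityMeasure P] [NeZero ν] (h : SampledIID P F ν X R)
    {g : T → ℝ} (hg : Measurable g) (hgi : Integrable (fun x => exp (g x)) ν)
    (hr : ∫ x, exp (g x) ∂ν ≤ 1) (n : ℕ) :
    P {ω | 0 ≤ ∑ k ∈ Icc 1 n, g (X k ω) * R k ω ∧ ρ * n ≤ ∑ k ∈ Icc 1 n, R k ω} ≤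
      ENNReal.ofReal (exp (ρ * n * log (∫ x, exp (g x) ∂ν))) := by
  set r := ∫ x, exp (g x) ∂ν
  have hr0 : 0 < r := integral_exp_pos hgi
  set Z := fun ω => ∏ k ∈ Icc 1 n, (R k ω * exp (g (X k ω)) + (1 - R k ω) * r)
  obtain ⟨hZi, hZ⟩ := h.integral_prod_factor (θ := fun x => exp (g x)) hg.exp hgi n
  set ε := exp ((n - ρ * n) * log r)
  have hsub : {ω | 0 ≤ ∑ k ∈ Icc 1 n, g (X k ω) * R k ω ∧ ρ * n ≤ ∑ k ∈ Icc 1 n, R k ω} ⊆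
      {ω | ε ≤ Z ω} := by
    rintro ω ⟨hpos, hcount⟩
    simp only [Set.mem_ofPred_eq, Z, h.prod_factor_exp_eq hr0, ε, exp_le_exp]
    nlinarith [log_nonpos hr0.le hr]
  have hmarkov : ε * P.real {ω | ε ≤ Z ω} ≤ r ^ n :=
    hZ ▸ mul_meas_ge_le_integral_of_nonneg
      (.of_forall fun ω => (exp_pos _).le.trans_eq (h.prod_factor_exp_eq hr0 n ω).symm) hZi ε
  calc P _ ≤ P {ω | ε ≤ Z ω} := measure_mono hsub
    _ = ENNReal.ofReal (P.real {ω | ε ≤ Z ω}) := (ofReal_measureReal (measure_ne_top _ _)).symm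
    _ ≤ ENNReal.ofReal (r ^ n / ε) := by
        gcongr
        rw [le_div_iff₀ (exp_pos _), mul_comm]
        exact hmarkov
    _ = ENNReal.ofReal (exp (ρ * n * log r)) := by
        rw [← exp_log hr0, ← exp_nat_mul, log_exp, ← exp_sub]
        ring_nf

lemma expDecay_sum_nonneg [IsProbabilityMeasure P] [NeZero ν] (h : SampledIID P F ν X R)
    {g : T → ℝ} (hg : Measurable g) (hgi : Integrable (fun x => exp (g x)) ν)
    (hr : ∫ x, exp (g x) ∂ν < 1) (hρ : 0 < ρ)
    (hfreq : ExpDecay fun n => P {ω | (∑ k ∈ Icc 1 n, R k ω) / n < ρ}) :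
    ExpDecay fun n => P {ω | 0 ≤ ∑ k ∈ Icc 1 n, g (X k ω) * R k ω} := by
  have hlog : log (∫ x, exp (g x) ∂ν) < 0 := log_neg (integral_exp_pos hgi) hr
  have hchernoff : ExpDecay fun n =>
      P {ω | 0 ≤ ∑ k ∈ Icc 1 n, g (X k ω) * R k ω ∧ ρ * n ≤ ∑ k ∈ Icc 1 n, R k ω} :=
    ⟨1, one_pos, -(ρ * log (∫ x, exp (g x) ∂ν)), by nlinarith, fun n _ =>
      (h.measure_sum_nonneg_le hg hgi hr.le n).trans_eq (by ring_nf)⟩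
  refine (hchernoff.add hfreq).mono fun n hn => (measure_mono fun ω hω => ?_).trans
    (measure_union_le _ _)
  by_cases hlow : (∑ k ∈ Icc 1 n, R k ω) / n < ρ
  · exact Or.inr hlow
  · refine Or.inl ⟨hω, ?_⟩
    rwa [not_lt, le_div_iff₀ (by exact_mod_cast hn)] at hlow

lemma expDecay_llr_sum_nonpos [IsProbabilityMeasure P] {p q : Measure T}
    [IsProbabilityMeasure p] [IsProbabilityMeasure q] (h : SampledIID P F p X R) (hpq : p ≪ q)
    (hne : p ≠ q) (hρ : 0 < ρ)
    (hfreq : ExpDecay fun n => P {ω | (∑ k ∈ Icc 1 n, R k ω) / n < ρ}) :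
    ExpDecay fun n => P {ω | ∑ k ∈ Icc 1 n, llr p q (X k ω) * R k ω ≤ 0} := by
  obtain ⟨hi, hr⟩ := integral_exp_neg_half_llr hpq (p := p) (q := q)
  refine (h.expDecay_sum_nonneg (g := fun x => -llr p q x / 2)
    ((measurable_llr p q).neg.div_const 2) hi
    (hr ▸ bhattacharyya_lt_one hpq hne) hρ hfreq).mono fun n _ => measure_mono fun ω hω => ?_
  simp only [Set.mem_ofPred_eq, neg_div, neg_mul, sum_neg_distrib, div_mul_eq_mul_div,
    ← sum_div] at hω ⊢
  linarith

lemma expDecay_llr_sum_pos [IsProbabilityMeasure P] {p q : Measure T}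
    [IsProbabilityMeasure p] [IsProbabilityMeasure q] (h : SampledIID P F q X R) (hpq : p ≪ q)
    (hqp : q ≪ p) (hne : p ≠ q) (hρ : 0 < ρ)
    (hfreq : ExpDecay fun n => P {ω | (∑ k ∈ Icc 1 n, R k ω) / n < ρ}) :
    ExpDecay fun n => P {ω | 0 < ∑ k ∈ Icc 1 n, llr p q (X k ω) * R k ω} := by
  obtain ⟨hi, hr⟩ := integral_exp_half_llr hqp (p := p) (q := q)
  refine (h.expDecay_sum_nonneg ((measurable_llr p q).div_const 2) hi
    (hr ▸ bhattacharyya_lt_one hpq hne) hρ hfreq).mono fun n _ => measure_mono fun ω hω => ?_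
  simp only [Set.mem_ofPred_eq, div_mul_eq_mul_div, ← sum_div] at hω ⊢
  linarith

lemma expDecay_misclassified [IsProbabilityMeasure P] {p q : Measure T}
    [IsProbabilityMeasure p] [IsProbabilityMeasure q] {b : Prop} [Decidable b]
    (h : SampledIID P F (if b then p else q) X R) (hpq : p ≪ q) (hqp : q ≪ p) (hne : p ≠ q)
    (hρ : 0 < ρ) (hfreq : ExpDecay fun n => P {ω | (∑ k ∈ Icc 1 n, R k ω) / n < ρ}) :
    ExpDecay fun n => P {ω | ¬(0 < ∑ k ∈ Icc 1 n, llr p q (X k ω) * R k ω ↔ b)} := by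
  by_cases hb : b
  · rw [if_pos hb] at h
    refine (h.expDecay_llr_sum_nonpos hpq hne hρ hfreq).mono
      fun n _ => measure_mono fun ω hω => ?_
    simpa [hb] using hω
  · rw [if_neg hb] at h
    refine (h.expDecay_llr_sum_pos hpq hqp hne hρ hfreq).mono
      fun n _ => measure_mono fun ω hω => ?_
    simpa [hb] using hω

end SampledIID

theorem stmt_18_general {Ω : Type*} [mΩ : MeasurableSpace Ω] (P : Measure Ω) [IsProbabilityMeasure P]
    (M : ℕ)
    {S : Fin M → Type*} [mS : ∀ i, MeasurableSpace (S i)]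
    (μ0 μ1 : ∀ i, Measure (S i))
    (hprob0 : ∀ i, IsProbabilityMeasure (μ0 i)) (hprob1 : ∀ i, IsProbabilityMeasure (μ1 i))
    -- the Kullback–Leibler numbers I_i and J_i are finite and positive
    (hac1 : ∀ i, μ1 i ≪ μ0 i) (hac0 : ∀ i, μ0 i ≪ μ1 i)
    (hIpos : ∀ i, 0 < ∫ x, llr (μ1 i) (μ0 i) x ∂(μ1 i))
    -- the subset of anomalous sources
    (A : Finset (Fin M))
    -- the filtration
    (F : Filtration ℕ mΩ)
    -- the observations: mutually independent sequences of i.i.d. random elements, with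
    -- X_i(n) ~ μ1_i when i ∈ A and X_i(n) ~ μ0_i when i ∉ A, adapted and with the vector
    -- of time-n observations independent of the past
    (X : ∀ i : Fin M, ℕ → Ω → S i)
    (hXmeas : ∀ i, ∀ n : ℕ, 1 ≤ n → Measurable[F n] (X i n))
    (hXlaw : ∀ i, ∀ n : ℕ, 1 ≤ n →
      Measure.map (X i n) P = if i ∈ A then μ1 i else μ0 i)
    (hXindep : ∀ n : ℕ, 1 ≤ n →
      Indep (⨆ i : Fin M, MeasurableSpace.comap (X i n) (mS i)) (F (n - 1)) P)
    -- the sampling indicators, previsible and {0,1}-valued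
    (R : Fin M → ℕ → Ω → ℝ)
    (hR01 : ∀ i n ω, R i n ω = 0 ∨ R i n ω = 1)
    (hRmeas : ∀ i, ∀ n : ℕ, 1 ≤ n → Measurable[F (n - 1)] (R i n))
    -- hypothesis: for some ρ > 0, the empirical sampling frequency of every source falls
    -- below ρ with exponentially decaying probability
    (ρ : ℝ) (hρ : 0 < ρ)
    (hfreq : ∀ i : Fin M, ∃ c > (0:ℝ), ∃ d > (0:ℝ), ∀ n : ℕ, 1 ≤ n →
      P {ω | (∑ m ∈ Finset.Icc 1 n, R i m ω) / n < ρ}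
        ≤ ENNReal.ofReal (c * Real.exp (-d * n))) :
    -- conclusion: P_A(σ_A > n) is exponentially decaying, where {σ_A > n} is the event
    -- that the estimate Δ_m = {i : Λ_i(m) > 0} differs from A at some time m ≥ n
    ∃ c > (0:ℝ), ∃ d > (0:ℝ), ∀ n : ℕ, 1 ≤ n →
      P {ω | ∃ m : ℕ, n ≤ m ∧
          {i : Fin M | 0 < ∑ k ∈ Finset.Icc 1 m, llr (μ1 i) (μ0 i) (X i k ω) * R i k ω}
            ≠ (A : Set (Fin M))}
        ≤ ENNReal.ofReal (c * Real.exp (-d * n)) := by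
  set Λ := fun i m ω => ∑ k ∈ Icc 1 m, llr (μ1 i) (μ0 i) (X i k ω) * R i k ω
  have := hprob0
  have := hprob1
  have hsampled : ∀ i, SampledIID P F (if i ∈ A then μ1 i else μ0 i) (X i) (R i) := fun i =>
    ⟨hXmeas i, hXlaw i, fun n hn => indep_of_indep_of_le_left (hXindep n hn)
      (le_iSup (fun j => MeasurableSpace.comap (X j n) (mS j)) i), hR01 i, hRmeas i⟩
  have hdecay : ∀ i, ExpDecay fun m => P {ω | ¬(0 < Λ i m ω ↔ i ∈ A)} := fun i =>
    (hsampled i).expDecay_misclassified (hac1 i) (hac0 i) (ne_of_integral_llr_pos (hIpos i)) hρ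
      (hfreq i)
  have hcover : ∀ n, {ω | ∃ m, n ≤ m ∧ {i | 0 < Λ i m ω} ≠ (A : Set (Fin M))} ⊆
      ⋃ k, ⋃ i, {ω | ¬(0 < Λ i (n + k) ω ↔ i ∈ A)} := by
    rintro n ω ⟨m, hnm, hmis⟩
    obtain ⟨k, rfl⟩ := Nat.exists_eq_add_of_le hnm
    by_contra hω
    simp only [Set.mem_iUnion, Set.mem_ofPred_eq, not_exists, not_not] at hω
    exact hmis (Set.ext fun i => hω k i)
  refine (ExpDecay.sum univ fun i _ => hdecay i).tsum_tail.mono fun n _ => ?_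
  calc P _ ≤ P (⋃ k, ⋃ i, {ω | ¬(0 < Λ i (n + k) ω ↔ i ∈ A)}) := measure_mono (hcover n)
    _ ≤ ∑' k, P (⋃ i, {ω | ¬(0 < Λ i (n + k) ω ↔ i ∈ A)}) := measure_iUnion_le _
    _ ≤ _ := ENNReal.tsum_le_tsum fun k => measure_iUnion_fintype_le _ _

theorem stmt_18 {Ω : Type*} [mΩ : MeasurableSpace Ω] (P : Measure Ω) [IsProbabilityMeasure P]
    (M : ℕ) (hM : 2 ≤ M)
    {S : Fin M → Type*} [mS : ∀ i, MeasurableSpace (S i)]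
    (μ0 μ1 : ∀ i, Measure (S i))
    (hprob0 : ∀ i, IsProbabilityMeasure (μ0 i)) (hprob1 : ∀ i, IsProbabilityMeasure (μ1 i))
    -- the Kullback–Leibler numbers I_i and J_i are finite and positive
    (hac1 : ∀ i, μ1 i ≪ μ0 i) (hac0 : ∀ i, μ0 i ≪ μ1 i)
    (hint1 : ∀ i, Integrable (llr (μ1 i) (μ0 i)) (μ1 i))
    (hint0 : ∀ i, Integrable (llr (μ0 i) (μ1 i)) (μ0 i))
    (hIpos : ∀ i, 0 < ∫ x, llr (μ1 i) (μ0 i) x ∂(μ1 i))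
    (hJpos : ∀ i, 0 < ∫ x, llr (μ0 i) (μ1 i) x ∂(μ0 i))
    -- the subset of anomalous sources
    (A : Finset (Fin M))
    -- the filtration
    (F : Filtration ℕ mΩ)
    -- the observations: mutually independent sequences of i.i.d. random elements, with
    -- X_i(n) ~ μ1_i when i ∈ A and X_i(n) ~ μ0_i when i ∉ A, adapted and with the vector
    -- of time-n observations independent of the past
    (X : ∀ i : Fin M, ℕ → Ω → S i)
    (hXmeas : ∀ i, ∀ n : ℕ, 1 ≤ n → Measurable[F n] (X i n))
    (hXlaw : ∀ i, ∀ n : ℕ, 1 ≤ n →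
      Measure.map (X i n) P = if i ∈ A then μ1 i else μ0 i)
    (hXiid : iIndepFun (m := fun p : Fin M × ℕ => mS p.1) (fun p ω => X p.1 p.2 ω) P)
    (hXindep : ∀ n : ℕ, 1 ≤ n →
      Indep (⨆ i : Fin M, MeasurableSpace.comap (X i n) (mS i)) (F (n - 1)) P)
    -- the sampling indicators, previsible and {0,1}-valued
    (R : Fin M → ℕ → Ω → ℝ)
    (hR01 : ∀ i n ω, R i n ω = 0 ∨ R i n ω = 1)
    (hRmeas : ∀ i, ∀ n : ℕ, 1 ≤ n → Measurable[F (n - 1)] (R i n))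
    -- hypothesis: for some ρ > 0, the empirical sampling frequency of every source falls
    -- below ρ with exponentially decaying probability
    (ρ : ℝ) (hρ : 0 < ρ)
    (hfreq : ∀ i : Fin M, ∃ c > (0:ℝ), ∃ d > (0:ℝ), ∀ n : ℕ, 1 ≤ n →
      P {ω | (∑ m ∈ Finset.Icc 1 n, R i m ω) / n < ρ}
        ≤ ENNReal.ofReal (c * Real.exp (-d * n))) :
    -- conclusion: P_A(σ_A > n) is exponentially decaying, where {σ_A > n} is the event
    -- that the estimate Δ_m = {i : Λ_i(m) > 0} differs from A at some time m ≥ n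
    ∃ c > (0:ℝ), ∃ d > (0:ℝ), ∀ n : ℕ, 1 ≤ n →
      P {ω | ∃ m : ℕ, n ≤ m ∧
          {i : Fin M | 0 < ∑ k ∈ Finset.Icc 1 m, llr (μ1 i) (μ0 i) (X i k ω) * R i k ω}
            ≠ (A : Set (Fin M))}
        ≤ ENNReal.ofReal (c * Real.exp (-d * n)) :=
  stmt_18_general (mΩ := mΩ) P M (mS := mS) μ0 μ1 hprob0 hprob1 hac1 hac0 hIpos A F X hXmeas hXlaw
    hXindep R hR01 hRmeas ρ hρ hfreq
end
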